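/- arXiv:1002.0783 — 2 statements merged into one kernel-verified Lean document; each statement's English description precedes it below -/
import Mathlib

section
/- For every finite simple graph G, r_e(G) = r'_e(G); that is, the minimum number of edges whose deletion from G leaves a graph with chromatic index Δ(G) equals the minimum, over all proper edge colorings of G with χ'(G) = Δ(G) + k colors, of the total size of the union of some k color classes. -/
set_option linter.unusedSectionVars false
set_option linter.unusedVariables false
set_option maxHeartbeats 1000000
open scoped Classical


variable {V : Type}

/-- `c` is a proper edge coloring of the set `S` of edges, using the `n`
colors `0, …, n-1`: distinct edges of `S` sharing a vertex get distinct
colors. -/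
def EdgeProperOn (S : Set (Sym2 V)) (c : Sym2 V → ℕ) (n : ℕ) : Prop :=
  (∀ e ∈ S, c e < n) ∧
    ∀ e ∈ S, ∀ f ∈ S, e ≠ f → (∃ v : V, v ∈ e ∧ v ∈ f) → c e ≠ c f

/-- The set `S` of edges is properly `n`-edge-colorable. -/
def EdgeColorableOn (S : Set (Sym2 V)) (n : ℕ) : Prop :=
  ∃ c : Sym2 V → ℕ, EdgeProperOn S c n

/-- The chromatic index of the graph with edge set `S`. -/
noncomputable def edgeChromIndex (S : Set (Sym2 V)) : ℕ :=
  sInf {n | EdgeColorableOn S n}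

/-- The degree of the vertex `x` in the graph with edge set `S`. -/
noncomputable def edgeDegOn (S : Set (Sym2 V)) (x : V) : ℕ :=
  {e | e ∈ S ∧ x ∈ e}.ncard

/-- The maximum degree of the graph with edge set `S`. -/
noncomputable def edgeMaxDegOn [Fintype V] (S : Set (Sym2 V)) : ℕ :=
  Finset.univ.sup (edgeDegOn S)

/-- `S` is (the edge set of) a maximum `Δ(G)`-edge-colorable subgraph of the
simple graph `G`: among the `Δ(G)`-edge-colorable subgraphs of `G` it has as
many edges as possible. -/
def SimpleGraph.IsMaxColorableSub [Fintype V] (G : SimpleGraph V) [DecidableRel G.Adj]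
    (S : Set (Sym2 V)) : Prop :=
  S ⊆ G.edgeSet ∧ EdgeColorableOn S G.maxDegree ∧
    ∀ T : Set (Sym2 V), T ⊆ G.edgeSet → EdgeColorableOn T G.maxDegree →
      T.ncard ≤ S.ncard

/-- `r_e(G)`: the minimum number of edges that must be removed from the simple
graph `G` in order to obtain a graph whose chromatic index equals `Δ(G)`. -/
noncomputable def removalNumber [Fintype V] (G : SimpleGraph V) [DecidableRel G.Adj] : ℕ :=
  sInf {n | ∃ D : Set (Sym2 V), D ⊆ G.edgeSet ∧ D.ncard = n ∧
    edgeChromIndex (G.edgeSet \ D) = G.maxDegree}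

/-- `r'_e(G)`: the minimum, over all proper edge colorings of `G` with
`χ'(G) = Δ(G) + k` colors, of the total size of the union of some `k` of the
color classes. -/
noncomputable def colorClassRemovalNumber [Fintype V] (G : SimpleGraph V)
    [DecidableRel G.Adj] : ℕ :=
  sInf {m | ∃ c : Sym2 V → ℕ,
    EdgeProperOn G.edgeSet c (edgeChromIndex G.edgeSet) ∧
    ∃ K : Finset ℕ, (∀ x ∈ K, x < edgeChromIndex G.edgeSet) ∧
      K.card = edgeChromIndex G.edgeSet - G.maxDegree ∧
      {e | e ∈ G.edgeSet ∧ c e ∈ K}.ncard = m}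

section Infra
variable [Fintype V]

/-- colors appearing at a vertex -/
def colorsAt' (T : Set (Sym2 V)) (c : Sym2 V → ℕ) (v : V) : Set ℕ :=
  c '' {e | e ∈ T ∧ v ∈ e}

lemma colorableOn_mono_set {S S' : Set (Sym2 V)} {n : ℕ} (h : S' ⊆ S) :
    EdgeColorableOn S n → EdgeColorableOn S' n := by
  rintro ⟨c, h1, h2⟩
  exact ⟨c, fun e he => h1 e (h he), fun e he f hf => h2 e (h he) f (h hf)⟩

lemma colorableOn_mono_nat {S : Set (Sym2 V)} {n m : ℕ} (h : n ≤ m) :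
    EdgeColorableOn S n → EdgeColorableOn S m := by
  rintro ⟨c, h1, h2⟩
  exact ⟨c, fun e he => lt_of_lt_of_le (h1 e he) h, h2⟩

lemma colorableOn_ncard (S : Set (Sym2 V)) : EdgeColorableOn S S.ncard := by
  classical
  have : Finite S := (Set.toFinite S).to_subtype
  refine ⟨fun e => if h : e ∈ S then ((Finite.equivFin S) ⟨e, h⟩ : ℕ) else 0, ?_, ?_⟩
  · intro e he
    simp only [dif_pos he]
    have := ((Finite.equivFin S) ⟨e, he⟩).isLt
    exact lt_of_lt_of_eq this (Nat.card_coe_set_eq S)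
  · intro e he f hf hef _
    simp only [dif_pos he, dif_pos hf]
    intro h
    apply hef
    have := (Finite.equivFin S).injective (Fin.ext h)
    exact Subtype.mk_eq_mk.mp this

lemma colorableOn_chromIndex (S : Set (Sym2 V)) : EdgeColorableOn S (edgeChromIndex S) :=
  Nat.sInf_mem (⟨S.ncard, colorableOn_ncard S⟩ : {n | EdgeColorableOn S n}.Nonempty)

lemma chromIndex_le_iff {S : Set (Sym2 V)} {n : ℕ} :
    edgeChromIndex S ≤ n ↔ EdgeColorableOn S n := by
  constructor
  · intro h
    exact colorableOn_mono_nat h (colorableOn_chromIndex S)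
  · intro h
    exact Nat.sInf_le h

lemma ncard_colorsAt_le (T : Set (Sym2 V)) (c : Sym2 V → ℕ) (v : V) :
    (colorsAt' T c v).ncard ≤ edgeDegOn T v :=
  Set.ncard_image_le (Set.toFinite _)

lemma exists_free_color {T : Set (Sym2 V)} {c : Sym2 V → ℕ} {v : V} {n : ℕ}
    (h : edgeDegOn T v < n) : ∃ γ, γ < n ∧ γ ∉ colorsAt' T c v := by
  by_contra hc
  push_neg at hc
  have hsub : (Finset.range n : Set ℕ) ⊆ colorsAt' T c v := by
    intro γ hγ
    exact hc γ (by simpa using hγ)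
  have := Set.ncard_le_ncard hsub ((Set.toFinite {e | e ∈ T ∧ v ∈ e}).image c)
  simp only [Set.ncard_coe_finset, Finset.card_range] at this
  have := le_trans this (ncard_colorsAt_le T c v)
  omega

lemma edgeDegOn_mono {S S' : Set (Sym2 V)} (h : S' ⊆ S) (v : V) :
    edgeDegOn S' v ≤ edgeDegOn S v :=
  Set.ncard_le_ncard (fun e he => ⟨h he.1, he.2⟩) (Set.toFinite _)

lemma edgeDegOn_diff_singleton {S : Set (Sym2 V)} {e₀ : Sym2 V} {v : V}
    (he : e₀ ∈ S) (hv : v ∈ e₀) : edgeDegOn (S \ {e₀}) v + 1 = edgeDegOn S v := by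
  have h : {e | e ∈ S ∧ v ∈ e} = insert e₀ {e | e ∈ (S \ {e₀}) ∧ v ∈ e} := by
    ext f
    simp only [Set.mem_setOf_eq, Set.mem_insert_iff, Set.mem_diff, Set.mem_singleton_iff]
    constructor
    · rintro ⟨hf, hvf⟩
      by_cases hfe : f = e₀
      · exact Or.inl hfe
      · exact Or.inr ⟨⟨hf, hfe⟩, hvf⟩
    · rintro (rfl | ⟨⟨hf, _⟩, hvf⟩)
      · exact ⟨he, hv⟩
      · exact ⟨hf, hvf⟩
  have h2 : {e | e ∈ S ∧ v ∈ e}.ncard = {e | e ∈ (S \ {e₀}) ∧ v ∈ e}.ncard + 1 := by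
    rw [h, Set.ncard_insert_of_notMem (by simp) (Set.toFinite _)]
  simp only [edgeDegOn, h2]

/-- a color appears at most once at each vertex -/
lemma unique_color_edge {S : Set (Sym2 V)} {c : Sym2 V → ℕ} {n : ℕ}
    (hc : EdgeProperOn S c n) {v : V} {e f : Sym2 V} (he : e ∈ S) (hf : f ∈ S)
    (hve : v ∈ e) (hvf : v ∈ f) (hcol : c e = c f) : e = f := by
  by_contra hne
  exact hc.2 e he f hf hne ⟨v, hve, hvf⟩ hcol

/-- extend a proper coloring by one fresh edge with a fresh color -/
lemma properOn_insert_fresh {S : Set (Sym2 V)} {c : Sym2 V → ℕ} {n : ℕ} {f : Sym2 V}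
    (hc : EdgeProperOn S c n) (hf : f ∉ S) :
    EdgeProperOn (insert f S) (fun e => if e = f then n else c e) (n + 1) := by
  classical
  constructor
  · intro e he
    by_cases h : e = f
    · simp [h]
    · simp only [if_neg h]
      rcases he with rfl | he
      · exact absurd rfl h
      · exact lt_trans (hc.1 e he) (Nat.lt_succ_self n)
  · intro e he g hg hne _
    rcases he with rfl | he <;> rcases hg with rfl | hg
    · exact absurd rfl hne
    · simp only [if_pos rfl, if_neg (fun h : g = e => hf (h ▸ hg))]
      exact fun h => absurd h.symm (Nat.ne_of_lt (hc.1 g hg))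
    · simp only [if_pos rfl, if_neg (fun h : e = g => hf (h ▸ he))]
      exact Nat.ne_of_lt (hc.1 e he)
    · simp only [if_neg (fun h : e = f => hf (h ▸ he)), if_neg (fun h : g = f => hf (h ▸ hg))]
      exact fun h => hc.2 e he g hg hne ‹_› h

/-- relabeling through an injective-on-used-colors map -/
lemma properOn_relabel {S : Set (Sym2 V)} {c : Sym2 V → ℕ} {n m : ℕ}
    (hc : EdgeProperOn S c n) (A : Finset ℕ) (hA : ∀ e ∈ S, c e ∈ A)
    (g : ℕ → ℕ) (hg : Set.InjOn g A) (hb : ∀ a ∈ A, g a < m) :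
    EdgeProperOn S (fun e => g (c e)) m := by
  constructor
  · intro e he; exact hb _ (hA e he)
  · intro e he f hf hne hshare h
    exact hc.2 e he f hf hne hshare (hg (hA e he) (hA f hf) h)

end Infra

section Kempe
variable [Fintype V]

/-- each color appears at most once at a vertex -/
def Uniq (T : Set (Sym2 V)) (c : Sym2 V → ℕ) : Prop :=
  ∀ v e f, e ∈ T → f ∈ T → v ∈ e → v ∈ f → c e = c f → e = f

def kstep (T : Set (Sym2 V)) (c : Sym2 V → ℕ) (a b : ℕ) (p q : V) : Prop :=
  p ≠ q ∧ s(p,q) ∈ T ∧ (c s(p,q) = a ∨ c s(p,q) = b)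

def kcomp (T : Set (Sym2 V)) (c : Sym2 V → ℕ) (a b : ℕ) (u : V) : Set V :=
  {v | Relation.ReflTransGen (kstep T c a b) u v}

lemma kstep_symm {T : Set (Sym2 V)} {c : Sym2 V → ℕ} {a b : ℕ} :
    Symmetric (kstep T c a b) := by
  rintro p q ⟨h1, h2, h3⟩
  exact ⟨h1.symm, by rwa [Sym2.eq_swap], by rwa [Sym2.eq_swap]⟩

lemma kcomp_symm {T : Set (Sym2 V)} {c : Sym2 V → ℕ} {a b : ℕ} {u v : V} :
    v ∈ kcomp T c a b u ↔ u ∈ kcomp T c a b v :=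
  ⟨fun h => by
    haveI : Std.Symm (kstep T c a b) := ⟨fun _ _ hh => kstep_symm hh⟩
    exact Std.Symm.symm (r := Relation.ReflTransGen (kstep T c a b)) _ _ h,
   fun h => by
    haveI : Std.Symm (kstep T c a b) := ⟨fun _ _ hh => kstep_symm hh⟩
    exact Std.Symm.symm (r := Relation.ReflTransGen (kstep T c a b)) _ _ h⟩

lemma kcomp_comm {T : Set (Sym2 V)} {c : Sym2 V → ℕ} {a b : ℕ} {u : V} :
    kcomp T c a b u = kcomp T c b a u := by
  have h : ∀ a b, kstep T c a b = kstep T c b a := by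
    intro a b; ext p q; exact ⟨fun ⟨h1,h2,h3⟩ => ⟨h1,h2,h3.symm⟩, fun ⟨h1,h2,h3⟩ => ⟨h1,h2,h3.symm⟩⟩
  unfold kcomp; rw [h]

lemma self_mem_kcomp {T : Set (Sym2 V)} {c : Sym2 V → ℕ} {a b : ℕ} {u : V} :
    u ∈ kcomp T c a b u := Relation.ReflTransGen.refl

lemma kcomp_mono {T T' : Set (Sym2 V)} {c : Sym2 V → ℕ} {a b : ℕ} {u : V} (h : T' ⊆ T) :
    kcomp T' c a b u ⊆ kcomp T c a b u := by
  intro v hv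
  exact Relation.ReflTransGen.mono ((fun p q hh => ⟨hh.1, h hh.2.1, hh.2.2⟩) :
    ∀ p q, kstep T' c a b p q → kstep T c a b p q) _ _ hv

/-- if `w` has no `{a,b}`-edge, its component is trivial -/
lemma kcomp_isolated {T : Set (Sym2 V)} {c : Sym2 V → ℕ} {a b : ℕ} {w : V}
    (ha : a ∉ colorsAt' T c w) (hb : b ∉ colorsAt' T c w) :
    kcomp T c a b w = {w} := by
  apply Set.eq_singleton_iff_unique_mem.mpr
  refine ⟨self_mem_kcomp, ?_⟩
  intro v hv
  rcases Relation.ReflTransGen.cases_head hv with h | ⟨q, hq, _⟩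
  · exact h.symm
  · rcases hq.2.2 with h | h
    · exact absurd ⟨s(w,q), ⟨hq.2.1, by simp⟩, h⟩ ha
    · exact absurd ⟨s(w,q), ⟨hq.2.1, by simp⟩, h⟩ hb

/-- all endpoints of an `{a,b}`-edge touching the component are in the component -/
lemma edge_endpoints_in_kcomp {T : Set (Sym2 V)} {c : Sym2 V → ℕ} {a b : ℕ} {u : V}
    (hnd : ∀ e ∈ T, ¬ e.IsDiag) {e : Sym2 V} (he : e ∈ T) (hab : c e = a ∨ c e = b)
    {p : V} (hp : p ∈ e) (hpc : p ∈ kcomp T c a b u) :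
    ∀ q ∈ e, q ∈ kcomp T c a b u := by
  intro q hq
  obtain ⟨y, rfl⟩ : ∃ y, e = s(p,y) := by
    obtain ⟨y, h⟩ := Sym2.mem_iff_exists.mp hp
    exact ⟨y, h⟩
  have hpy : p ≠ y := by
    intro h; exact hnd _ he (by simp [h])
  rcases Sym2.mem_iff.mp hq with rfl | rfl
  · exact hpc
  · exact Relation.ReflTransGen.tail hpc ⟨hpy, he, hab⟩

noncomputable def kswap (T : Set (Sym2 V)) (c : Sym2 V → ℕ) (a b : ℕ) (u : V) :
    Sym2 V → ℕ :=
  fun e => if e ∈ T ∧ (c e = a ∨ c e = b) ∧ ∃ p ∈ e, p ∈ kcomp T c a b u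
    then (if c e = a then b else a) else c e

lemma kswap_eq_of_swapped {T : Set (Sym2 V)} {c : Sym2 V → ℕ} {a b : ℕ} {u : V} {e : Sym2 V}
    (h1 : e ∈ T) (h2 : c e = a ∨ c e = b) (h3 : ∃ p ∈ e, p ∈ kcomp T c a b u) :
    kswap T c a b u e = if c e = a then b else a := if_pos ⟨h1, h2, h3⟩

lemma kswap_eq_of_not_touch {T : Set (Sym2 V)} {c : Sym2 V → ℕ} {a b : ℕ} {u : V} {e : Sym2 V}
    (h3 : ¬ ∃ p ∈ e, p ∈ kcomp T c a b u) : kswap T c a b u e = c e := by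
  unfold kswap; rw [if_neg]
  rintro ⟨_, _, p, hp, hpc⟩
  exact h3 ⟨p, hp, hpc⟩

lemma kswap_eq_of_not_ab {T : Set (Sym2 V)} {c : Sym2 V → ℕ} {a b : ℕ} {u : V} {e : Sym2 V}
    (h2 : ¬ (c e = a ∨ c e = b)) : kswap T c a b u e = c e := by
  unfold kswap; rw [if_neg]; tauto

lemma kswap_mem_ab {T : Set (Sym2 V)} {c : Sym2 V → ℕ} {a b : ℕ} {u : V} {e : Sym2 V} :
    kswap T c a b u e = c e ∨ (c e = a ∧ kswap T c a b u e = b) ∨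
      (c e = b ∧ kswap T c a b u e = a) := by
  unfold kswap
  split
  · rename_i h
    rcases h.2.1 with h1 | h1
    · right; left; exact ⟨h1, if_pos h1⟩
    · by_cases h2 : c e = a
      · right; left; exact ⟨h2, if_pos h2⟩
      · right; right; exact ⟨h1, if_neg h2⟩
  · left; rfl

/-- an edge at a vertex outside the component is untouched -/
lemma kswap_eq_outside {T : Set (Sym2 V)} {c : Sym2 V → ℕ} {a b : ℕ} {u : V}
    (hnd : ∀ e ∈ T, ¬ e.IsDiag) {v : V} (hv : v ∉ kcomp T c a b u)
    {e : Sym2 V} (he : e ∈ T) (hve : v ∈ e) : kswap T c a b u e = c e := by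
  by_cases h2 : c e = a ∨ c e = b
  · apply kswap_eq_of_not_touch
    rintro ⟨p, hp, hpc⟩
    exact hv (edge_endpoints_in_kcomp hnd he h2 hp hpc v hve)
  · exact kswap_eq_of_not_ab h2

lemma colorsAt'_kswap_outside {T : Set (Sym2 V)} {c : Sym2 V → ℕ} {a b : ℕ} {u : V}
    (hnd : ∀ e ∈ T, ¬ e.IsDiag) {v : V} (hv : v ∉ kcomp T c a b u) :
    colorsAt' T (kswap T c a b u) v = colorsAt' T c v := by
  unfold colorsAt'
  apply Set.image_congr
  rintro e ⟨he, hve⟩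
  exact kswap_eq_outside hnd hv he hve

/-- swap keeps properness -/
lemma kswap_proper {T : Set (Sym2 V)} {c : Sym2 V → ℕ} {n a b : ℕ} {u : V}
    (hc : EdgeProperOn T c n) (hnd : ∀ e ∈ T, ¬ e.IsDiag)
    (ha : a < n) (hb : b < n) (hab : a ≠ b) :
    EdgeProperOn T (kswap T c a b u) n := by
  constructor
  · intro e he
    rcases kswap_mem_ab (T := T) (c := c) (a := a) (b := b) (u := u) (e := e) with h | ⟨_, h⟩ | ⟨_, h⟩
    · rw [h]; exact hc.1 e he
    · rw [h]; exact hb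
    · rw [h]; exact ha
  · intro e he f hf hef ⟨v, hve, hvf⟩
    have key : ∀ g, g ∈ T → v ∈ g →
        ((kswap T c a b u g = c g ∧ ¬ (c g = a ∨ c g = b)) ∨
         (kswap T c a b u g = c g ∧ (c g = a ∨ c g = b) ∧ v ∉ kcomp T c a b u) ∨
         ((c g = a ∧ kswap T c a b u g = b ∨ c g = b ∧ kswap T c a b u g = a)
            ∧ v ∈ kcomp T c a b u)) := by
      intro g hg hvg
      by_cases h2 : c g = a ∨ c g = b
      · by_cases h3 : v ∈ kcomp T c a b u
        · right; right
          refine ⟨?_, h3⟩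
          have := kswap_eq_of_swapped hg h2 ⟨v, hvg, h3⟩
          rcases h2 with h2 | h2
          · left; exact ⟨h2, by rw [this, if_pos h2]⟩
          · right; refine ⟨h2, ?_⟩
            rw [this]
            by_cases h4 : c g = a
            · rw [h4] at h2; exact absurd h2 hab
            · rw [if_neg h4]
        · right; left
          exact ⟨kswap_eq_outside hnd h3 hg hvg, h2, h3⟩
      · left; exact ⟨kswap_eq_of_not_ab h2, h2⟩
    have hcc := hc.2 e he f hf hef ⟨v, hve, hvf⟩
    rcases key e he hve with ⟨he1, he2⟩ | ⟨he1, he2, he3⟩ | ⟨he1, he2⟩ <;>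
      rcases key f hf hvf with ⟨hf1, hf2⟩ | ⟨hf1, hf2, hf3⟩ | ⟨hf1, hf2⟩
    · rw [he1, hf1]; exact hcc
    · rw [he1, hf1]; exact hcc
    · rw [he1]
      rcases hf1 with ⟨hf1, hf1'⟩ | ⟨hf1, hf1'⟩ <;> rw [hf1'] <;> tauto
    · rw [he1, hf1]; exact hcc
    · rw [he1, hf1]; exact hcc
    · exact absurd hf2 (fun h => he3 h)
    · rw [hf1]
      rcases he1 with ⟨he1, he1'⟩ | ⟨he1, he1'⟩ <;> rw [he1'] <;> tauto
    · exact absurd he2 (fun h => hf3 h)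
    · rcases he1 with ⟨he1, he1'⟩ | ⟨he1, he1'⟩ <;> rcases hf1 with ⟨hf1, hf1'⟩ | ⟨hf1, hf1'⟩ <;>
        rw [he1', hf1']
      · exact absurd (he1.trans hf1.symm) (fun h => hcc h)
      · exact hab.symm
      · exact hab
      · exact absurd (he1.trans hf1.symm) (fun h => hcc h)
end Kempe
section Peel
variable [Fintype V]

def kedges (T : Set (Sym2 V)) (c : Sym2 V → ℕ) (a b : ℕ) (u : V) (γ : ℕ) : Set (Sym2 V) :=
  {e | e ∈ T ∧ c e = γ ∧ ∃ p ∈ e, p ∈ kcomp T c a b u}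

lemma kedges_comm {T : Set (Sym2 V)} {c : Sym2 V → ℕ} {a b γ : ℕ} {u : V} :
    kedges T c a b u γ = kedges T c b a u γ := by
  unfold kedges; rw [kcomp_comm]

lemma colorsAt'_mono {T T' : Set (Sym2 V)} {c : Sym2 V → ℕ} {v : V} (h : T' ⊆ T) :
    colorsAt' T' c v ⊆ colorsAt' T c v := by
  rintro γ ⟨e, ⟨he, hv⟩, rfl⟩
  exact ⟨e, ⟨h he, hv⟩, rfl⟩

lemma uniq_mono {T T' : Set (Sym2 V)} {c : Sym2 V → ℕ} (h : T' ⊆ T) (hu : Uniq T c) :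
    Uniq T' c := fun v e f he hf hve hvf hc => hu v e f (h he) (h hf) hve hvf hc

lemma not_mem_kcomp_of_no_edges {T : Set (Sym2 V)} {c : Sym2 V → ℕ} {a b : ℕ} {w z : V}
    (ha : a ∉ colorsAt' T c w) (hb : b ∉ colorsAt' T c w) (hwz : w ≠ z) :
    w ∉ kcomp T c a b z := by
  intro h
  have := kcomp_symm.mp h
  rw [kcomp_isolated ha hb] at this
  exact hwz this.symm

lemma kcomp_peel {T : Set (Sym2 V)} {c : Sym2 V → ℕ} {a b : ℕ} {w z : V}
    (hnd : ∀ e ∈ T, ¬ e.IsDiag) (huniq : Uniq T c)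
    (hb : b ∉ colorsAt' T c w) (he₀ : s(w,z) ∈ T) (hc₀ : c s(w,z) = a) (hwz : w ≠ z) :
    kcomp T c a b w = insert w (kcomp (T \ {s(w,z)}) c a b z) := by
  set T' := T \ {s(w,z)} with hT'
  have hsub : T' ⊆ T := Set.diff_subset
  have haw' : a ∉ colorsAt' T' c w := by
    rintro ⟨e, ⟨⟨he, hne⟩, hwe⟩, hce⟩
    exact hne (huniq w e s(w,z) he he₀ hwe (by simp) (hce.trans hc₀.symm))
  have hbw' : b ∉ colorsAt' T' c w := fun h => hb (colorsAt'_mono hsub h)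
  have hwK : w ∉ kcomp T' c a b z := not_mem_kcomp_of_no_edges haw' hbw' hwz
  apply Set.Subset.antisymm
  · intro v hv
    induction hv with
    | refl => exact Set.mem_insert _ _
    | @tail p q hwp step ih =>
      rcases Set.mem_insert_iff.mp ih with rfl | hp
      · -- step from w
        obtain ⟨hpq', hmem, hcol⟩ := step
        have heq : s(p,q) = s(p,z) := by
          rcases hcol with h | h
          · exact huniq p s(p,q) s(p,z) hmem he₀ (by simp) (by simp) (h.trans hc₀.symm)
          · exact absurd ⟨s(p,q), ⟨hmem, by simp⟩, h⟩ hb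
        have hq : q = z := by
          rcases Sym2.eq_iff.mp heq with ⟨_, h⟩ | ⟨h1, h2⟩
          · exact h
          · exact h2.trans h1
        rw [hq]
        exact Set.mem_insert_iff.mpr (Or.inr self_mem_kcomp)
      · obtain ⟨hpq', hmem, hcol⟩ := step
        by_cases heq : s(p,q) = s(w,z)
        · rcases Sym2.eq_iff.mp heq with ⟨h1, _⟩ | ⟨h1, h2⟩
          · rw [h1] at hp; exact absurd hp hwK
          · rw [h2]; exact Set.mem_insert _ _
        · exact Set.mem_insert_iff.mpr
            (Or.inr (Relation.ReflTransGen.tail hp ⟨hpq', ⟨hmem, heq⟩, hcol⟩))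
  · intro v hv
    rcases Set.mem_insert_iff.mp hv with rfl | hv
    · exact self_mem_kcomp
    · have h1 : z ∈ kcomp T c a b w := Relation.ReflTransGen.single ⟨hwz, he₀, Or.inl hc₀⟩
      exact Relation.ReflTransGen.trans h1 (kcomp_mono hsub hv)

lemma kedges_peel_a {T : Set (Sym2 V)} {c : Sym2 V → ℕ} {a b : ℕ} {w z : V}
    (hnd : ∀ e ∈ T, ¬ e.IsDiag) (huniq : Uniq T c)
    (hb : b ∉ colorsAt' T c w) (he₀ : s(w,z) ∈ T) (hc₀ : c s(w,z) = a) (hwz : w ≠ z) :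
    kedges T c a b w a = insert s(w,z) (kedges (T \ {s(w,z)}) c a b z a) := by
  have hsub : T \ {s(w,z)} ⊆ T := Set.diff_subset
  have hpeel := kcomp_peel hnd huniq hb he₀ hc₀ hwz
  apply Set.Subset.antisymm
  · rintro e ⟨he, hce, p, hpe, hpc⟩
    by_cases heq : e = s(w,z)
    · rw [heq]; exact Set.mem_insert _ _
    · refine Set.mem_insert_iff.mpr (Or.inr ⟨⟨he, heq⟩, hce, ?_⟩)
      rw [hpeel] at hpc
      rcases Set.mem_insert_iff.mp hpc with rfl | hpc
      · exact absurd (huniq p e s(p,z) he he₀ hpe (by simp) (hce.trans hc₀.symm)) heq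
      · exact ⟨p, hpe, hpc⟩
  · rintro e he
    rcases Set.mem_insert_iff.mp he with rfl | ⟨he, hce, p, hpe, hpc⟩
    · exact ⟨he₀, hc₀, w, by simp, self_mem_kcomp⟩
    · exact ⟨hsub he, hce, p, hpe, by
        rw [hpeel]; exact Set.mem_insert_iff.mpr (Or.inr hpc)⟩

lemma kedges_peel_b {T : Set (Sym2 V)} {c : Sym2 V → ℕ} {a b : ℕ} {w z : V}
    (hnd : ∀ e ∈ T, ¬ e.IsDiag) (huniq : Uniq T c) (hab : a ≠ b)
    (hb : b ∉ colorsAt' T c w) (he₀ : s(w,z) ∈ T) (hc₀ : c s(w,z) = a) (hwz : w ≠ z) :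
    kedges T c a b w b = kedges (T \ {s(w,z)}) c a b z b := by
  have hsub : T \ {s(w,z)} ⊆ T := Set.diff_subset
  have hpeel := kcomp_peel hnd huniq hb he₀ hc₀ hwz
  apply Set.Subset.antisymm
  · rintro e ⟨he, hce, p, hpe, hpc⟩
    have heq' : e ≠ s(w,z) := by
      intro h; rw [h, hc₀] at hce; exact hab hce
    refine ⟨⟨he, heq'⟩, hce, ?_⟩
    rw [hpeel] at hpc
    rcases Set.mem_insert_iff.mp hpc with rfl | hpc
    · exact absurd ⟨e, ⟨he, hpe⟩, hce⟩ hb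
    · exact ⟨p, hpe, hpc⟩
  · rintro e ⟨he, hce, p, hpe, hpc⟩
    exact ⟨hsub he, hce, p, hpe, by
      rw [hpeel]; exact Set.mem_insert_iff.mpr (Or.inr hpc)⟩

lemma abSet_comm {T : Set (Sym2 V)} {c : Sym2 V → ℕ} {a b : ℕ} :
    {e | e ∈ T ∧ (c e = a ∨ c e = b)} = {e | e ∈ T ∧ (c e = b ∨ c e = a)} := by
  ext e; constructor
  · rintro ⟨h1, h2⟩; exact ⟨h1, h2.symm⟩
  · rintro ⟨h1, h2⟩; exact ⟨h1, h2.symm⟩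

lemma kempe_balance : ∀ (n : ℕ) (T : Set (Sym2 V)) (c : Sym2 V → ℕ) (a b : ℕ) (w : V),
    {e | e ∈ T ∧ (c e = a ∨ c e = b)}.ncard = n →
    (∀ e ∈ T, ¬ e.IsDiag) → Uniq T c → a ≠ b → b ∉ colorsAt' T c w →
    (kedges T c a b w a).ncard ≤ (kedges T c a b w b).ncard + 1 ∧
    (kedges T c a b w b).ncard ≤ (kedges T c a b w a).ncard := by
  intro n
  induction n using Nat.strong_induction_on with
  | _ n IH =>
    intro T c a b w hn hnd huniq hab hb
    by_cases ha : a ∈ colorsAt' T c w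
    · obtain ⟨e₀, ⟨he₀, hwe₀⟩, hce₀⟩ := ha
      obtain ⟨z, rfl⟩ : ∃ z, e₀ = s(w,z) := by
        obtain ⟨z, h⟩ := Sym2.mem_iff_exists.mp hwe₀
        exact ⟨z, h⟩
      have hwz : w ≠ z := fun h => hnd _ he₀ (by simp [h])
      set T' := T \ {s(w,z)} with hT'
      have hsub : T' ⊆ T := Set.diff_subset
      have hmem : s(w,z) ∈ {e | e ∈ T ∧ (c e = a ∨ c e = b)} := ⟨he₀, Or.inl hce₀⟩
      have hcount : {e | e ∈ T' ∧ (c e = a ∨ c e = b)}.ncard = n - 1 := by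
        have hset : {e | e ∈ T' ∧ (c e = a ∨ c e = b)}
            = {e | e ∈ T ∧ (c e = a ∨ c e = b)} \ {s(w,z)} := by
          ext e; constructor
          · rintro ⟨⟨he, hne⟩, hc⟩; exact ⟨⟨he, hc⟩, hne⟩
          · rintro ⟨⟨he, hc⟩, hne⟩; exact ⟨⟨he, hne⟩, hc⟩
        rw [hset, Set.ncard_diff_singleton_of_mem hmem, hn]
      have hnpos : 1 ≤ n := by
        rw [← hn]
        exact (Set.ncard_pos (Set.toFinite _)).mpr ⟨_, hmem⟩
      have haz' : a ∉ colorsAt' T' c z := by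
        rintro ⟨e, ⟨⟨he, hne⟩, hze⟩, hce⟩
        exact hne (huniq z e s(w,z) he he₀ hze (by simp) (hce.trans hce₀.symm))
      have hcount' : {e | e ∈ T' ∧ (c e = b ∨ c e = a)}.ncard = n - 1 := by
        rw [← abSet_comm]; exact hcount
      have IH' := IH (n-1) (by omega) T' c b a z hcount'
        (fun e he => hnd e (hsub he)) (uniq_mono hsub huniq) hab.symm haz'
      have ea : kedges T' c b a z a = kedges T' c a b z a :=
        (kedges_comm (T := T') (c := c) (a := a) (b := b) (u := z) (γ := a)).symm ▸ rfl
      have ea' : kedges T' c b a z a = kedges T' c a b z a := by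
        rw [← kedges_comm (T := T') (c := c) (a := a) (b := b) (u := z) (γ := a)]
      have eb' : kedges T' c b a z b = kedges T' c a b z b := by
        rw [← kedges_comm (T := T') (c := c) (a := a) (b := b) (u := z) (γ := b)]
      rw [ea', eb'] at IH'
      have hA := kedges_peel_a hnd huniq hb he₀ hce₀ hwz
      have hB := kedges_peel_b hnd huniq hab hb he₀ hce₀ hwz
      have hAcard : (kedges T c a b w a).ncard = (kedges T' c a b z a).ncard + 1 := by
        rw [hA, Set.ncard_insert_of_notMem (fun h => h.1.2 rfl) (Set.toFinite _)]
      have hBcard : (kedges T c a b w b).ncard = (kedges T' c a b z b).ncard := by rw [hB]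
      omega
    · have hiso := kcomp_isolated ha hb
      have hea : kedges T c a b w a = ∅ := by
        apply Set.eq_empty_iff_forall_notMem.mpr
        rintro e ⟨he, hce, p, hpe, hpc⟩
        rw [hiso] at hpc
        exact ha ⟨e, ⟨he, hpc ▸ hpe⟩, hce⟩
      have heb : kedges T c a b w b = ∅ := by
        apply Set.eq_empty_iff_forall_notMem.mpr
        rintro e ⟨he, hce, p, hpe, hpc⟩
        rw [hiso] at hpc
        exact hb ⟨e, ⟨he, hpc ▸ hpe⟩, hce⟩
      simp [hea, heb]

lemma kempe_deficient : ∀ (n : ℕ) (T : Set (Sym2 V)) (c : Sym2 V → ℕ) (a b : ℕ) (x : V),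
    {e | e ∈ T ∧ (c e = a ∨ c e = b)}.ncard = n →
    (∀ e ∈ T, ¬ e.IsDiag) → Uniq T c → a ≠ b → a ∉ colorsAt' T c x →
    {v | v ∈ kcomp T c a b x ∧ v ≠ x ∧
      (a ∉ colorsAt' T c v ∨ b ∉ colorsAt' T c v)}.ncard ≤ 1 := by
  intro n
  induction n using Nat.strong_induction_on with
  | _ n IH =>
    intro T c a b x hn hnd huniq hab hax
    by_cases hbx : b ∈ colorsAt' T c x
    · obtain ⟨e₀, ⟨he₀, hxe₀⟩, hce₀⟩ := hbx
      obtain ⟨z, rfl⟩ : ∃ z, e₀ = s(x,z) := by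
        obtain ⟨z, h⟩ := Sym2.mem_iff_exists.mp hxe₀
        exact ⟨z, h⟩
      have hxz : x ≠ z := fun h => hnd _ he₀ (by simp [h])
      set T' := T \ {s(x,z)} with hT'
      have hsub : T' ⊆ T := Set.diff_subset
      have hpeel : kcomp T c a b x = insert x (kcomp T' c a b z) := by
        rw [kcomp_comm, kcomp_peel hnd huniq hax he₀ hce₀ hxz,
          kcomp_comm (T := T') (a := b) (b := a)]
      have hbz' : b ∉ colorsAt' T' c z := by
        rintro ⟨e, ⟨⟨he, hne⟩, hze⟩, hce⟩
        exact hne (huniq z e s(x,z) he he₀ hze (by simp) (hce.trans hce₀.symm))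
      have hmem : s(x,z) ∈ {e | e ∈ T ∧ (c e = a ∨ c e = b)} := ⟨he₀, Or.inr hce₀⟩
      have hcount : {e | e ∈ T' ∧ (c e = a ∨ c e = b)}.ncard = n - 1 := by
        have hset : {e | e ∈ T' ∧ (c e = a ∨ c e = b)}
            = {e | e ∈ T ∧ (c e = a ∨ c e = b)} \ {s(x,z)} := by
          ext e; constructor
          · rintro ⟨⟨he, hne⟩, hc⟩; exact ⟨⟨he, hc⟩, hne⟩
          · rintro ⟨⟨he, hc⟩, hne⟩; exact ⟨⟨he, hne⟩, hc⟩
        rw [hset, Set.ncard_diff_singleton_of_mem hmem, hn]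
      have hnpos : 1 ≤ n := by
        rw [← hn]
        exact (Set.ncard_pos (Set.toFinite _)).mpr ⟨_, hmem⟩
      have hcount' : {e | e ∈ T' ∧ (c e = b ∨ c e = a)}.ncard = n - 1 := by
        rw [← abSet_comm]; exact hcount
      by_cases haz : a ∈ colorsAt' T c z
      · have IH' := IH (n-1) (by omega) T' c b a z hcount'
          (fun e he => hnd e (hsub he)) (uniq_mono hsub huniq) hab.symm hbz'
        refine le_trans (Set.ncard_le_ncard ?_ (Set.toFinite _)) IH'
        rintro v ⟨hv, hvx, hmiss⟩
        rw [hpeel] at hv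
        rcases Set.mem_insert_iff.mp hv with rfl | hv
        · exact absurd rfl hvx
        · have hvz : v ≠ z := by
            rintro rfl
            rcases hmiss with h | h
            · exact h haz
            · exact h ⟨s(x,v), ⟨he₀, by simp⟩, hce₀⟩
          refine ⟨by rw [← kcomp_comm]; exact hv, hvz, ?_⟩
          rcases hmiss with h | h
          · exact Or.inr (fun hh => h (colorsAt'_mono hsub hh))
          · exact Or.inl (fun hh => h (colorsAt'_mono hsub hh))
      · have haz' : a ∉ colorsAt' T' c z := fun h => haz (colorsAt'_mono hsub h)
        have hiso : kcomp T' c a b z = {z} := kcomp_isolated haz' hbz'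
        have hsubz : {v | v ∈ kcomp T c a b x ∧ v ≠ x ∧
            (a ∉ colorsAt' T c v ∨ b ∉ colorsAt' T c v)} ⊆ {z} := by
          rintro v ⟨hv, hvx, _⟩
          rw [hpeel, hiso] at hv
          rcases Set.mem_insert_iff.mp hv with rfl | hv
          · exact absurd rfl hvx
          · exact hv
        calc {v | v ∈ kcomp T c a b x ∧ v ≠ x ∧
            (a ∉ colorsAt' T c v ∨ b ∉ colorsAt' T c v)}.ncard
            ≤ ({z} : Set V).ncard := Set.ncard_le_ncard hsubz (Set.toFinite _)
        _ = 1 := Set.ncard_singleton z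
    · have hiso := kcomp_isolated hax hbx
      have hempty : {v | v ∈ kcomp T c a b x ∧ v ≠ x ∧
          (a ∉ colorsAt' T c v ∨ b ∉ colorsAt' T c v)} = ∅ := by
        apply Set.eq_empty_iff_forall_notMem.mpr
        rintro v ⟨hv, hvx, _⟩
        rw [hiso] at hv
        exact hvx hv
      simp [hempty]

/-- the swap increases the number of high edges by at most one -/
lemma kswap_cost {T : Set (Sym2 V)} {c : Sym2 V → ℕ} {n a b d : ℕ} {u : V}
    (hc : EdgeProperOn T c n) (hnd : ∀ e ∈ T, ¬ e.IsDiag) (hab : a ≠ b) (had : a < d)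
    (hbu : b ∉ colorsAt' T c u) :
    {e | e ∈ T ∧ d ≤ kswap T c a b u e}.ncard ≤ {e | e ∈ T ∧ d ≤ c e}.ncard + 1 := by
  have huniq : Uniq T c := fun v e f he hf hve hvf hcol => by
    by_contra hne
    exact hc.2 e he f hf hne ⟨v, hve, hvf⟩ hcol
  by_cases hbd : b < d
  · have hset : {e | e ∈ T ∧ d ≤ kswap T c a b u e} = {e | e ∈ T ∧ d ≤ c e} := by
      ext e
      simp only [Set.mem_setOf_eq, and_congr_right_iff]
      intro he
      rcases kswap_mem_ab (T := T) (c := c) (a := a) (b := b) (u := u) (e := e) with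
        h | ⟨h1, h2⟩ | ⟨h1, h2⟩
      · rw [h]
      · rw [h2, h1]; omega
      · rw [h2, h1]; omega
    rw [hset]; omega
  · push_neg at hbd
    set A := kedges T c a b u a with hAdef
    set B := kedges T c a b u b with hBdef
    set Hi := {e | e ∈ T ∧ d ≤ c e} with hHidef
    have hBHi : B ⊆ Hi := by
      rintro e ⟨he, hce, _⟩
      exact ⟨he, hce ▸ hbd⟩
    have hsub : {e | e ∈ T ∧ d ≤ kswap T c a b u e} ⊆ (Hi \ B) ∪ A := by
      rintro e ⟨he, hke⟩
      by_cases htouch : ∃ p ∈ e, p ∈ kcomp T c a b u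
      · by_cases hcab : c e = a ∨ c e = b
        · rcases hcab with h1 | h1
          · exact Or.inr ⟨he, h1, htouch⟩
          · have hcea : c e ≠ a := by rw [h1]; exact fun hh => hab hh.symm
            have : kswap T c a b u e = a := by
              rw [kswap_eq_of_swapped he (Or.inr h1) htouch, if_neg hcea]
            rw [this] at hke; omega
        · have heq := kswap_eq_of_not_ab (T := T) (c := c) (a := a) (b := b) (u := u) (e := e) hcab
          rw [heq] at hke
          refine Or.inl ⟨⟨he, hke⟩, ?_⟩
          rintro ⟨_, hce, _⟩
          exact hcab (Or.inr hce)
      · have heq := kswap_eq_of_not_touch htouch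
        rw [heq] at hke
        refine Or.inl ⟨⟨he, hke⟩, ?_⟩
        rintro ⟨_, _, htch⟩
        exact htouch htch
    have hbal := (kempe_balance _ T c a b u rfl hnd huniq hab hbu).1
    have h1 : ((Hi \ B) ∪ A).ncard ≤ (Hi \ B).ncard + A.ncard :=
      Set.ncard_union_le _ _
    have h2 : (Hi \ B).ncard = Hi.ncard - B.ncard := Set.ncard_diff hBHi (Set.toFinite _)
    have h3 : B.ncard ≤ Hi.ncard := Set.ncard_le_ncard hBHi (Set.toFinite _)
    have h4 := Set.ncard_le_ncard hsub (Set.toFinite _)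
    rw [← hAdef, ← hBdef] at hbal
    omega
end Peel
section Extend
variable [Fintype V]

lemma kswap_eq_of_not_mem {T : Set (Sym2 V)} {c : Sym2 V → ℕ} {a b : ℕ} {u : V} {e : Sym2 V}
    (h : e ∉ T) : kswap T c a b u e = c e := by
  unfold kswap; rw [if_neg]; rintro ⟨h1, _⟩; exact h h1

/-- after swapping the component of a vertex missing `b`, it misses `a` -/
lemma kswap_missing {T : Set (Sym2 V)} {c : Sym2 V → ℕ} {a b : ℕ} {u : V} {v : V}
    (hab : a ≠ b) (hv : v ∈ kcomp T c a b u) (hmiss : b ∉ colorsAt' T c v) :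
    a ∉ colorsAt' T (kswap T c a b u) v := by
  rintro ⟨e, ⟨he, hve⟩, hce⟩
  rcases kswap_mem_ab (T := T) (c := c) (a := a) (b := b) (u := u) (e := e) with
    h | ⟨h1, h2⟩ | ⟨h1, h2⟩
  · -- unchanged : c e = a, but then e is an {a,b}-edge at v ∈ comp, so it must be swapped
    have hca : c e = a := h ▸ hce
    have hsw := kswap_eq_of_swapped he (Or.inl hca) ⟨v, hve, hv⟩
    rw [if_pos hca] at hsw
    exact hab ((hsw.symm.trans hce).symm)
  · exact hab ((h2.symm.trans hce).symm)
  · exact hmiss ⟨e, ⟨he, hve⟩, h1⟩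

/-- symmetric version: vertex missing `a` misses `b` after the swap -/
lemma kswap_missing' {T : Set (Sym2 V)} {c : Sym2 V → ℕ} {a b : ℕ} {u : V} {v : V}
    (hab : a ≠ b) (hv : v ∈ kcomp T c a b u) (hmiss : a ∉ colorsAt' T c v) :
    b ∉ colorsAt' T (kswap T c a b u) v := by
  rintro ⟨e, ⟨he, hve⟩, hce⟩
  rcases kswap_mem_ab (T := T) (c := c) (a := a) (b := b) (u := u) (e := e) with
    h | ⟨h1, h2⟩ | ⟨h1, h2⟩
  · have hcb : c e = b := h ▸ hce
    have hne : c e ≠ a := fun hh => hmiss ⟨e, ⟨he, hve⟩, hh⟩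
    have hsw := kswap_eq_of_swapped he (Or.inr hcb) ⟨v, hve, hv⟩
    rw [if_neg hne] at hsw
    exact hab (hsw.symm.trans hce)
  · exact hmiss ⟨e, ⟨he, hve⟩, h1⟩
  · exact hab (h2.symm.trans hce)

/-- components only depend on the two color classes -/
lemma kcomp_congr {T T' : Set (Sym2 V)} {c c' : Sym2 V → ℕ} {a b : ℕ}
    (ha : {e | e ∈ T ∧ c e = a} = {e | e ∈ T' ∧ c' e = a})
    (hb : {e | e ∈ T ∧ c e = b} = {e | e ∈ T' ∧ c' e = b}) (u : V) :
    kcomp T c a b u = kcomp T' c' a b u := by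
  have hstep : kstep T c a b = kstep T' c' a b := by
    ext p q
    constructor
    · rintro ⟨h1, h2, h3 | h3⟩
      · have := (Set.ext_iff.mp ha s(p,q)).mp ⟨h2, h3⟩
        exact ⟨h1, this.1, Or.inl this.2⟩
      · have := (Set.ext_iff.mp hb s(p,q)).mp ⟨h2, h3⟩
        exact ⟨h1, this.1, Or.inr this.2⟩
    · rintro ⟨h1, h2, h3 | h3⟩
      · have := (Set.ext_iff.mp ha s(p,q)).mpr ⟨h2, h3⟩
        exact ⟨h1, this.1, Or.inl this.2⟩
      · have := (Set.ext_iff.mp hb s(p,q)).mpr ⟨h2, h3⟩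
        exact ⟨h1, this.1, Or.inr this.2⟩
  unfold kcomp; rw [hstep]

/-- color one uncolored edge -/
lemma color_last {S : Set (Sym2 V)} {ψ : Sym2 V → ℕ} {n d γ : ℕ} {p q : V}
    (hfS : s(p,q) ∈ S) (hprop : EdgeProperOn (S \ {s(p,q)}) ψ n) (hγ : γ < n)
    (hp : γ ∉ colorsAt' (S \ {s(p,q)}) ψ p) (hq : γ ∉ colorsAt' (S \ {s(p,q)}) ψ q) :
    EdgeProperOn S (fun e => if e = s(p,q) then γ else ψ e) n ∧
    {e | e ∈ S ∧ d ≤ (fun e => if e = s(p,q) then γ else ψ e) e}.ncard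
      ≤ {e | e ∈ S \ {s(p,q)} ∧ d ≤ ψ e}.ncard + (if d ≤ γ then 1 else 0) := by
  set f := s(p,q) with hf
  constructor
  · constructor
    · intro e he
      by_cases h : e = f
      · simp only [if_pos h]; exact hγ
      · simp only [if_neg h]; exact hprop.1 e ⟨he, h⟩
    · intro e he g hg hne ⟨v, hve, hvg⟩
      by_cases h1 : e = f <;> by_cases h2 : g = f
      · exact absurd (h1.trans h2.symm) hne
      · simp only [if_pos h1, if_neg h2]
        have hvf : v ∈ f := h1 ▸ hve
        have hgm : g ∈ S \ {f} := ⟨hg, h2⟩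
        intro hcontra
        rcases Sym2.mem_iff.mp hvf with rfl | rfl
        · exact hp ⟨g, ⟨hgm, hvg⟩, hcontra.symm⟩
        · exact hq ⟨g, ⟨hgm, hvg⟩, hcontra.symm⟩
      · simp only [if_neg h1, if_pos h2]
        have hvf : v ∈ f := h2 ▸ hvg
        have hem : e ∈ S \ {f} := ⟨he, h1⟩
        intro hcontra
        rcases Sym2.mem_iff.mp hvf with rfl | rfl
        · exact hp ⟨e, ⟨hem, hve⟩, hcontra⟩
        · exact hq ⟨e, ⟨hem, hve⟩, hcontra⟩
      · simp only [if_neg h1, if_neg h2]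
        exact hprop.2 e ⟨he, h1⟩ g ⟨hg, h2⟩ hne ⟨v, hve, hvg⟩
  · by_cases hd : d ≤ γ
    · rw [if_pos hd]
      have hsub : {e | e ∈ S ∧ d ≤ (fun e => if e = f then γ else ψ e) e}
          ⊆ insert f {e | e ∈ S \ {f} ∧ d ≤ ψ e} := by
        rintro e ⟨he, hde⟩
        have hde' : d ≤ if e = f then γ else ψ e := hde
        by_cases h : e = f
        · exact h ▸ Set.mem_insert _ _
        · rw [if_neg h] at hde'
          exact Set.mem_insert_iff.mpr (Or.inr ⟨⟨he, h⟩, hde'⟩)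
      calc _ ≤ (insert f {e | e ∈ S \ {f} ∧ d ≤ ψ e}).ncard :=
            Set.ncard_le_ncard hsub (Set.toFinite _)
        _ ≤ _ := Set.ncard_insert_le _ _
    · rw [if_neg hd]
      have hsub : {e | e ∈ S ∧ d ≤ (fun e => if e = f then γ else ψ e) e}
          ⊆ {e | e ∈ S \ {f} ∧ d ≤ ψ e} := by
        rintro e ⟨he, hde⟩
        have hde' : d ≤ if e = f then γ else ψ e := hde
        by_cases h : e = f
        · rw [if_pos h] at hde'; omega
        · rw [if_neg h] at hde'
          exact ⟨⟨he, h⟩, hde'⟩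
      simpa using Set.ncard_le_ncard hsub (Set.toFinite _)

lemma sxy_ne {x w w' : V} (hw : w ≠ x) (hww' : w' ≠ w) : s(x,w') ≠ s(x,w) := by
  intro h
  rcases Sym2.eq_iff.mp h with ⟨_, h2⟩ | ⟨h1, h2⟩
  · exact hww' h2
  · exact hw h1.symm
end Extend
section Shift
variable [Fintype V]

/-- move the uncolored edge from `s(x,w)` to `s(x,w')` by recoloring `s(x,w)` with `β`,
the color of `s(x,w')`. -/
lemma shift_step {S : Set (Sym2 V)} {ψ : Sym2 V → ℕ} {n d β : ℕ} {x w w' : V}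
    (hw : w ≠ x) (hw' : w' ≠ x) (hww' : w' ≠ w)
    (hS : s(x,w) ∈ S) (hS' : s(x,w') ∈ S)
    (hprop : EdgeProperOn (S \ {s(x,w)}) ψ n) (hβn : β < n)
    (hfree : β ∉ colorsAt' (S \ {s(x,w)}) ψ w) (hedge : ψ s(x,w') = β) :
    EdgeProperOn (S \ {s(x,w')}) (fun e => if e = s(x,w) then β else ψ e) n
    ∧ colorsAt' (S \ {s(x,w')}) (fun e => if e = s(x,w) then β else ψ e) x
        = colorsAt' (S \ {s(x,w)}) ψ x
    ∧ {e | e ∈ S \ {s(x,w')} ∧ d ≤ (fun e => if e = s(x,w) then β else ψ e) e}.ncard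
        = {e | e ∈ S \ {s(x,w)} ∧ d ≤ ψ e}.ncard
    ∧ ∀ γ, γ ≠ β → {e | e ∈ S \ {s(x,w')} ∧ (fun e => if e = s(x,w) then β else ψ e) e = γ}
        = {e | e ∈ S \ {s(x,w)} ∧ ψ e = γ} := by
  set ψ₁ := fun e => if e = s(x,w) then β else ψ e with hψ₁
  have hne : s(x,w') ≠ s(x,w) := sxy_ne hw hww'
  have hne2 : s(x,w) ≠ s(x,w') := hne.symm
  have hSw' : s(x,w') ∈ S \ {s(x,w)} := ⟨hS', hne⟩
  refine ⟨?_, ?_, ?_, ?_⟩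
  · constructor
    · intro e he
      by_cases h : e = s(x,w)
      · show (if e = s(x,w) then β else ψ e) < n
        rw [if_pos h]; exact hβn
      · show (if e = s(x,w) then β else ψ e) < n
        rw [if_neg h]; exact hprop.1 e ⟨he.1, h⟩
    · intro e he f hf hef ⟨v, hve, hvf⟩
      show (if e = s(x,w) then β else ψ e) ≠ (if f = s(x,w) then β else ψ f)
      by_cases h1 : e = s(x,w) <;> by_cases h2 : f = s(x,w)
      · exact absurd (h1.trans h2.symm) hef
      · rw [if_pos h1, if_neg h2]
        -- f shares v with s(x,w), v = x or v = w
        have hvm : v ∈ s(x,w) := h1 ▸ hve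
        have hfm : f ∈ S \ {s(x,w)} := ⟨hf.1, h2⟩
        intro hcontra
        rcases Sym2.mem_iff.mp hvm with hvx | hvw
        · -- v = x : another β-edge at x besides s(x,w'); properness forces f = s(x,w')
          have hvf' : x ∈ f := hvx ▸ hvf
          have : f = s(x,w') := by
            by_contra hc
            exact hprop.2 f hfm s(x,w') hSw' hc ⟨x, hvf', by simp⟩ (hcontra.symm.trans hedge.symm)
          exact hf.2 this
        · have hvf' : w ∈ f := hvw ▸ hvf
          exact hfree ⟨f, ⟨hfm, hvf'⟩, hcontra.symm⟩
      · rw [if_neg h1, if_pos h2]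
        have hvm : v ∈ s(x,w) := h2 ▸ hvf
        have hem : e ∈ S \ {s(x,w)} := ⟨he.1, h1⟩
        intro hcontra
        rcases Sym2.mem_iff.mp hvm with hvx | hvw
        · have hve' : x ∈ e := hvx ▸ hve
          have : e = s(x,w') := by
            by_contra hc
            exact hprop.2 e hem s(x,w') hSw' hc ⟨x, hve', by simp⟩ (hcontra.trans hedge.symm)
          exact he.2 this
        · have hve' : w ∈ e := hvw ▸ hve
          exact hfree ⟨e, ⟨hem, hve'⟩, hcontra⟩
      · rw [if_neg h1, if_neg h2]
        exact hprop.2 e ⟨he.1, h1⟩ f ⟨hf.1, h2⟩ hef ⟨v, hve, hvf⟩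
  · -- colors at x preserved
    apply Set.Subset.antisymm
    · rintro γ ⟨e, ⟨⟨heS, hew'⟩, hxe⟩, rfl⟩
      by_cases h : e = s(x,w)
      · refine ⟨s(x,w'), ⟨hSw', by simp⟩, ?_⟩
        show ψ s(x,w') = ψ₁ e
        rw [hψ₁]; simp only [if_pos h]; exact hedge
      · exact ⟨e, ⟨⟨heS, h⟩, hxe⟩, by show ψ e = ψ₁ e; rw [hψ₁]; simp only [if_neg h]⟩
    · rintro γ ⟨e, ⟨⟨heS, hew⟩, hxe⟩, rfl⟩
      by_cases h : e = s(x,w')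
      · refine ⟨s(x,w), ⟨⟨hS, hne2⟩, by simp⟩, ?_⟩
        show ψ₁ s(x,w) = ψ e
        rw [hψ₁]; simp only [if_pos rfl]; rw [h]; exact hedge.symm
      · have hew' : ¬ e = s(x,w) := fun hh => hew (by simp [hh])
        exact ⟨e, ⟨⟨heS, h⟩, hxe⟩, by show ψ₁ e = ψ e; rw [hψ₁]; simp only [if_neg hew']⟩
  · -- counts preserved
    by_cases hd : d ≤ β
    · have hL : {e | e ∈ S \ {s(x,w')} ∧ d ≤ ψ₁ e}
          = insert s(x,w) {e | e ∈ (S \ {s(x,w)}) \ {s(x,w')} ∧ d ≤ ψ e} := by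
        ext e
        simp only [Set.mem_setOf_eq, Set.mem_insert_iff, Set.mem_diff, Set.mem_singleton_iff]
        constructor
        · rintro ⟨⟨heS, hew'⟩, hde⟩
          by_cases h : e = s(x,w)
          · exact Or.inl h
          · have : d ≤ ψ e := by
              have := hde; rw [hψ₁] at this; simp only [if_neg h] at this; exact this
            exact Or.inr ⟨⟨⟨heS, h⟩, hew'⟩, this⟩
        · rintro (rfl | ⟨⟨⟨heS, hew⟩, hew'⟩, hde⟩)
          · exact ⟨⟨hS, hne2⟩, by rw [hψ₁]; simp only [if_pos rfl]; exact hd⟩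
          · exact ⟨⟨heS, hew'⟩, by rw [hψ₁]; simp only [if_neg hew]; exact hde⟩
      have hR : {e | e ∈ S \ {s(x,w)} ∧ d ≤ ψ e}
          = insert s(x,w') {e | e ∈ (S \ {s(x,w)}) \ {s(x,w')} ∧ d ≤ ψ e} := by
        ext e
        simp only [Set.mem_setOf_eq, Set.mem_insert_iff, Set.mem_diff, Set.mem_singleton_iff]
        constructor
        · rintro ⟨⟨heS, hew⟩, hde⟩
          by_cases h : e = s(x,w')
          · exact Or.inl h
          · exact Or.inr ⟨⟨⟨heS, hew⟩, h⟩, hde⟩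
        · rintro (rfl | ⟨⟨⟨heS, hew⟩, _⟩, hde⟩)
          · exact ⟨hSw', hedge ▸ hd⟩
          · exact ⟨⟨heS, hew⟩, hde⟩
      rw [hL, hR,
        Set.ncard_insert_of_notMem (fun h => h.1.1.2 rfl) (Set.toFinite _),
        Set.ncard_insert_of_notMem (fun h => h.1.2 rfl) (Set.toFinite _)]
    · push_neg at hd
      have hL : {e | e ∈ S \ {s(x,w')} ∧ d ≤ ψ₁ e} = {e | e ∈ S \ {s(x,w)} ∧ d ≤ ψ e} := by
        ext e
        simp only [Set.mem_setOf_eq, Set.mem_diff, Set.mem_singleton_iff]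
        constructor
        · rintro ⟨⟨heS, hew'⟩, hde⟩
          by_cases h : e = s(x,w)
          · rw [hψ₁] at hde; simp only [if_pos h] at hde; omega
          · rw [hψ₁] at hde; simp only [if_neg h] at hde
            exact ⟨⟨heS, h⟩, hde⟩
        · rintro ⟨⟨heS, hew⟩, hde⟩
          have h' : e ≠ s(x,w') := by
            rintro rfl; rw [hedge] at hde; omega
          exact ⟨⟨heS, h'⟩, by rw [hψ₁]; simp only [if_neg hew]; exact hde⟩
      rw [hL]
  · -- γ-classes preserved for γ ≠ β
    intro γ hγβ
    ext e
    simp only [Set.mem_setOf_eq, Set.mem_diff, Set.mem_singleton_iff]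
    constructor
    · rintro ⟨⟨heS, hew'⟩, hce⟩
      by_cases h : e = s(x,w)
      · rw [hψ₁] at hce; simp only [if_pos h] at hce; exact absurd hce.symm hγβ
      · rw [hψ₁] at hce; simp only [if_neg h] at hce
        exact ⟨⟨heS, h⟩, hce⟩
    · rintro ⟨⟨heS, hew⟩, hce⟩
      have h' : e ≠ s(x,w') := by
        rintro rfl; rw [hedge] at hce; exact hγβ hce.symm
      exact ⟨⟨heS, h'⟩, by rw [hψ₁]; simp only [if_neg hew]; exact hce⟩
end Shift
section FanSec
variable [Fintype V]

inductive Fan (S : Set (Sym2 V)) (x : V) (ψ : Sym2 V → ℕ) : List V → List ℕ → Prop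
  | single (w : V) : w ≠ x → Fan S x ψ [w] []
  | cons (w : V) (β : ℕ) (w' : V) (ws : List V) (βs : List ℕ) :
      w ≠ x →
      β ∉ colorsAt' (S \ {s(x,w)}) ψ w →
      s(x,w') ∈ S →
      ψ s(x,w') = β →
      Fan S x ψ (w' :: ws) βs →
      Fan S x ψ (w :: w' :: ws) (β :: βs)

variable {S : Set (Sym2 V)} {x : V} {ψ ψ' : Sym2 V → ℕ}

lemma fan_ne_x {L βs} (h : Fan S x ψ L βs) : ∀ v ∈ L, v ≠ x := by
  induction h with
  | single w hw => intro v hv; rw [List.mem_singleton] at hv; exact hv ▸ hw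
  | cons w β w' ws βs hw _ _ _ _ ih =>
    intro v hv
    rcases List.mem_cons.mp hv with rfl | hv
    · exact hw
    · exact ih v hv

lemma fan_length {L βs} (h : Fan S x ψ L βs) : L.length = βs.length + 1 := by
  induction h with
  | single w hw => rfl
  | cons w β w' ws βs _ _ _ _ _ ih => simp_all

lemma fan_edge_colors {L βs} (h : Fan S x ψ L βs) : ∀ v ∈ L.tail, ψ s(x,v) ∈ βs := by
  induction h with
  | single w hw => intro v hv; simp at hv
  | cons w β w' ws βs _ _ _ hψ _ ih =>
    intro v hv
    rcases List.mem_cons.mp hv with rfl | hv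
    · exact hψ ▸ List.mem_cons_self
    · exact List.mem_cons_of_mem _ (ih v hv)

lemma fan_getLast_edge_mem {L βs} (h : Fan S x ψ L βs) (h2 : 2 ≤ L.length) (hne : L ≠ []) :
    ψ s(x, L.getLast hne) ∈ βs := by
  have := fan_edge_colors h
  apply this
  -- getLast of a list of length ≥ 2 is in the tail
  match L, hne, h2 with
  | a :: b :: l, hne, _ =>
    have : (a :: b :: l).getLast hne = (b :: l).getLast (by simp) := by
      exact List.getLast_cons (by simp)
    rw [this]
    exact List.getLast_mem _

lemma fan_congr {L βs} (h : Fan S x ψ L βs) (wout : V) (hout : wout ∉ L)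
    (hagree : ∀ e, e ≠ s(x,wout) → ψ' e = ψ e) : Fan S x ψ' L βs := by
  induction h with
  | single w hw => exact Fan.single w hw
  | cons w β w' ws βs hw hfree hS hψe hfan ih =>
    have hwout : wout ≠ w := fun h => hout (h ▸ List.mem_cons_self)
    have hwout' : wout ∉ w' :: ws := fun h => hout (List.mem_cons_of_mem _ h)
    refine Fan.cons w β w' ws βs hw ?_ hS ?_ (ih hwout')
    · rintro ⟨e, ⟨heD, hwe⟩, hce⟩
      have hene : e ≠ s(x,wout) := by
        rintro rfl
        rcases Sym2.mem_iff.mp hwe with rfl | rfl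
        · exact hw rfl
        · exact hwout rfl
      rw [hagree e hene] at hce
      exact hfree ⟨e, ⟨heD, hwe⟩, hce⟩
    · have : s(x,w') ≠ s(x,wout) := by
        intro hh
        rcases Sym2.eq_iff.mp hh with ⟨_, h2⟩ | ⟨h1, h2⟩
        · exact hwout' (h2 ▸ (List.mem_cons_self (a := w') (l := ws)))
        · exact fan_ne_x hfan w' (List.mem_cons_self) h2
      rw [hagree _ this]; exact hψe

lemma fan_snoc {L βs} (h : Fan S x ψ L βs) (hne : L ≠ []) {β : ℕ} {z : V} (hz : z ≠ x)
    (hfree : β ∉ colorsAt' (S \ {s(x, L.getLast hne)}) ψ (L.getLast hne))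
    (hzS : s(x,z) ∈ S) (hψz : ψ s(x,z) = β) :
    Fan S x ψ (L ++ [z]) (βs ++ [β]) := by
  induction h with
  | single w hw =>
    simp only [List.getLast_singleton] at hfree
    exact Fan.cons w β z [] [] hw hfree hzS hψz (Fan.single z hz)
  | cons w βh w' ws βs hw hfreeh hS hψe hfan ih =>
    have hlast : (w :: w' :: ws).getLast hne = (w' :: ws).getLast (by simp) :=
      List.getLast_cons (by simp)
    rw [hlast] at hfree
    exact Fan.cons w βh w' (ws ++ [z]) (βs ++ [β]) hw hfreeh hS hψe (ih (by simp) hfree)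

lemma fan_split {L βs p q : _} {b : ℕ} (h : Fan S x ψ L βs) (hβs : βs = p ++ b :: q) :
    ∃ P u L', L = P ++ u :: L' ∧ P.length = p.length ∧
      Fan S x ψ (P ++ [u]) p ∧ Fan S x ψ (u :: L') (b :: q) := by
  induction h generalizing p with
  | single w hw => simp at hβs
  | cons w β w' ws βs hw hfree hS hψe hfan ih =>
    cases p with
    | nil =>
      simp only [List.nil_append] at hβs
      injection hβs with h1 h2
      subst h1; subst h2
      exact ⟨[], w, w' :: ws, rfl, rfl, Fan.single w hw,
        Fan.cons w β w' ws βs hw hfree hS hψe hfan⟩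
    | cons p₀ p' =>
      rw [List.cons_append] at hβs
      injection hβs with h1 hβs'
      subst h1
      obtain ⟨P', u, L', hL, hlen, hfan1, hfan2⟩ := ih hβs'
      refine ⟨w :: P', u, L', by rw [hL]; rfl, by simp [hlen], ?_, hfan2⟩
      -- Fan (w :: (P' ++ [u])) (β :: p')
      have hhead : ∃ rest, P' ++ [u] = w' :: rest := by
        cases P' with
        | nil =>
          have hL' := hL
          simp only [List.nil_append] at hL'
          injection hL' with h1 _
          exact ⟨[], by simp [h1]⟩
        | cons a P'' =>
          have hL' := hL
          rw [List.cons_append] at hL'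
          injection hL' with h1 _
          exact ⟨P'' ++ [u], by rw [List.cons_append, h1]⟩
      obtain ⟨rest, hrest⟩ := hhead
      rw [List.cons_append, hrest]
      have : Fan S x ψ (w' :: rest) p' := hrest ▸ hfan1
      exact Fan.cons w β w' rest p' hw hfree hS hψe this

lemma zip_right_unique : ∀ (L : List V) (βs : List ℕ), βs.Nodup →
    ∀ v v' γ, (v,γ) ∈ L.zip βs → (v',γ) ∈ L.zip βs → v = v' := by
  intro L
  induction L with
  | nil => intro βs _ v v' γ h; simp at h
  | cons w L' ih =>
    intro βs hnd v v' γ h1 h2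
    cases βs with
    | nil => simp at h1
    | cons β βs' =>
      rcases List.mem_cons.mp h1 with he1 | h1' <;> rcases List.mem_cons.mp h2 with he2 | h2'
      · rw [Prod.ext_iff] at he1 he2; simp at he1 he2
        exact he1.1.trans he2.1.symm
      · rw [Prod.ext_iff] at he1; simp at he1
        have : γ ∈ βs' := (List.of_mem_zip h2').2
        rw [he1.2] at this
        exact absurd this (List.nodup_cons.mp hnd).1
      · rw [Prod.ext_iff] at he2; simp at he2
        have : γ ∈ βs' := (List.of_mem_zip h1').2
        rw [he2.2] at this
        exact absurd this (List.nodup_cons.mp hnd).1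
      · exact ih βs' (List.nodup_cons.mp hnd).2 v v' γ h1' h2'

lemma fan_transfer_pairs {L βs} (h : Fan S x ψ L βs)
    (hedges : ∀ v ∈ L.tail, ψ' s(x,v) = ψ s(x,v))
    (hfree : ∀ v γ, (v, γ) ∈ L.zip βs →
      γ ∉ colorsAt' (S \ {s(x,v)}) ψ v → γ ∉ colorsAt' (S \ {s(x,v)}) ψ' v) :
    Fan S x ψ' L βs := by
  induction h with
  | single w hw => exact Fan.single w hw
  | cons w β w' ws βs hw hfr hS hψe hfan ih =>
    refine Fan.cons w β w' ws βs hw ?_ hS ?_ ?_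
    · exact hfree w β (by simp) hfr
    · rw [hedges w' (List.mem_cons_self)]; exact hψe
    · apply ih
      · intro v hv; exact hedges v (List.mem_cons_of_mem _ hv)
      · intro v γ hvγ
        exact hfree v γ (List.mem_cons_of_mem _ hvγ)
end FanSec
section ShiftExec
variable [Fintype V]

lemma shift_exec {S : Set (Sym2 V)} {x : V} {n d : ℕ} :
    ∀ (ws : List V) (w : V) (βs : List ℕ) (ψ : Sym2 V → ℕ),
    Fan S x ψ (w :: ws) βs →
    EdgeProperOn (S \ {s(x,w)}) ψ n →
    (∀ v ∈ w :: ws, s(x,v) ∈ S) →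
    (w :: ws).Nodup →
    (∀ β ∈ βs, β < n) →
    ∃ ψ' : Sym2 V → ℕ,
      EdgeProperOn (S \ {s(x, (w :: ws).getLast (by simp))}) ψ' n
      ∧ colorsAt' (S \ {s(x, (w :: ws).getLast (by simp))}) ψ' x
          = colorsAt' (S \ {s(x,w)}) ψ x
      ∧ {e | e ∈ S \ {s(x, (w :: ws).getLast (by simp))} ∧ d ≤ ψ' e}.ncard
          = {e | e ∈ S \ {s(x,w)} ∧ d ≤ ψ e}.ncard
      ∧ ∀ γ, γ ∉ βs → {e | e ∈ S \ {s(x, (w :: ws).getLast (by simp))} ∧ ψ' e = γ}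
          = {e | e ∈ S \ {s(x,w)} ∧ ψ e = γ} := by
  intro ws
  induction ws with
  | nil =>
    intro w βs ψ hfan hprop hmem hnd hβn
    have hβs : βs = [] := by
      have h := fan_length hfan
      simp only [List.length_singleton] at h
      exact List.length_eq_zero_iff.mp (by omega)
    subst hβs
    exact ⟨ψ, hprop, rfl, rfl, fun γ _ => rfl⟩
  | cons w' ws' ih =>
    intro w βs ψ hfan hprop hmem hnd hβn
    -- invert the fan
    rcases hfan with _ | ⟨_, β, _, _, βs', hwx, hfree, hS', hψe, hfan'⟩
    have hw'x : w' ≠ x := fan_ne_x hfan' w' (List.mem_cons_self)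
    have hw'w : w' ≠ w := by
      intro h
      have := (List.nodup_cons.mp hnd).1
      exact this (h ▸ List.mem_cons_self)
    have hSw : s(x,w) ∈ S := hmem w (List.mem_cons_self)
    have hSw' : s(x,w') ∈ S := hmem w' (List.mem_cons_of_mem _ (List.mem_cons_self))
    have hβn1 : β < n := hβn β (List.mem_cons_self)
    obtain ⟨hprop1, hcolx, hcount, hclass⟩ :=
      shift_step (d := d) hwx hw'x hw'w hSw hSw' hprop hβn1 hfree hψe
    set ψ₁ := fun e => if e = s(x,w) then β else ψ e with hψ₁
    -- transfer the inner fan to ψ₁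
    have hwout : w ∉ w' :: ws' := (List.nodup_cons.mp hnd).1
    have hfan₁ : Fan S x ψ₁ (w' :: ws') βs' := by
      apply fan_congr hfan' w hwout
      intro e he
      rw [hψ₁]; simp only [if_neg he]
    obtain ⟨ψ', h1, h2, h3, h4⟩ := ih w' βs' ψ₁ hfan₁ hprop1
      (fun v hv => hmem v (List.mem_cons_of_mem _ hv))
      (List.nodup_cons.mp hnd).2
      (fun γ hγ => hβn γ (List.mem_cons_of_mem _ hγ))
    have hlast : (w :: w' :: ws').getLast (by simp)
        = (w' :: ws').getLast (by simp) := List.getLast_cons (by simp)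
    refine ⟨ψ', ?_, ?_, ?_, ?_⟩
    · rw [hlast]; exact h1
    · rw [hlast]; exact h2.trans hcolx
    · rw [hlast]; exact h3.trans hcount
    · intro γ hγ
      have hγ' : γ ∉ βs' := fun h => hγ (List.mem_cons_of_mem _ h)
      have hγβ : γ ≠ β := fun h => hγ (h ▸ List.mem_cons_self)
      rw [hlast]
      exact (h4 γ hγ').trans (hclass γ hγβ)
end ShiftExec
section FanRec
variable [Fintype V]

lemma fan_rec {S : Set (Sym2 V)} {x y₀ : V} {ψ₀ : Sym2 V → ℕ} {d t : ℕ}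
    (hnd : ∀ e ∈ S, ¬ e.IsDiag) (hdeg : ∀ v, edgeDegOn S v ≤ d) (ht : 1 ≤ t)
    (hy₀ : y₀ ≠ x) (he₀ : s(x,y₀) ∈ S)
    (hψ₀ : EdgeProperOn (S \ {s(x,y₀)}) ψ₀ (d + t)) :
    ∀ (fuel : ℕ) (rest : List V) (βs : List ℕ),
    Fan S x ψ₀ (y₀ :: rest) βs →
    (y₀ :: rest).Nodup → βs.Nodup →
    (∀ β ∈ βs, β < d + t) →
    (∀ β ∈ βs, β ∈ colorsAt' (S \ {s(x,y₀)}) ψ₀ x) →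
    (∀ v ∈ y₀ :: rest, s(x,v) ∈ S) →
    d + t + 1 ≤ fuel + βs.length →
    ∃ c : Sym2 V → ℕ, EdgeProperOn S c (d + t) ∧
      {e | e ∈ S ∧ d ≤ c e}.ncard
        ≤ {e | e ∈ S \ {s(x,y₀)} ∧ d ≤ ψ₀ e}.ncard + 1 := by
  set n := d + t with hn
  set T₀ := S \ {s(x,y₀)} with hT₀
  have hndT₀ : ∀ e ∈ T₀, ¬ e.IsDiag := fun e he => hnd e he.1
  have huniqT₀ : Uniq T₀ ψ₀ := by
    intro v e f he hf hve hvf hc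
    by_contra hne
    exact hψ₀.2 e he f hf hne ⟨v, hve, hvf⟩ hc
  intro fuel
  induction fuel with
  | zero =>
    intro rest βs _ _ hβnd hβlt _ _ hfuel
    exfalso
    have h1 : βs.toFinset.card = βs.length := List.toFinset_card_of_nodup hβnd
    have h2 : βs.toFinset ⊆ Finset.range n := by
      intro γ hγ
      rw [List.mem_toFinset] at hγ
      exact Finset.mem_range.mpr (hβlt γ hγ)
    have := Finset.card_le_card h2
    rw [h1, Finset.card_range] at this
    omega
  | succ fuel ih =>
    intro rest βs hfan hnodup hβnd hβlt hβcolx hmem hfuel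
    have hLne : (y₀ :: rest) ≠ [] := by simp
    set lst := (y₀ :: rest).getLast hLne with hlstdef
    have hlstL : lst ∈ y₀ :: rest := List.getLast_mem hLne
    have hlstx : lst ≠ x := fan_ne_x hfan lst hlstL
    have hlstS : s(x,lst) ∈ S := hmem lst hlstL
    have hdlst : edgeDegOn T₀ lst < n := by
      have h1 : edgeDegOn T₀ lst ≤ edgeDegOn S lst :=
        edgeDegOn_mono (by rw [hT₀]; exact Set.diff_subset) lst
      have h2 := hdeg lst
      omega
    obtain ⟨β, hβn, hβfree⟩ := exists_free_color (T := T₀) (c := ψ₀) hdlst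
    -- key : edges at lst other than s(x,lst) are never s(x,y₀)... derive domain-freeness
    have hfreedom : β ∉ colorsAt' (S \ {s(x,lst)}) ψ₀ lst := by
      rintro ⟨e, ⟨⟨heS, hel⟩, hle⟩, hce⟩
      apply hβfree
      refine ⟨e, ⟨⟨heS, ?_⟩, hle⟩, hce⟩
      intro heq
      have heq' : e = s(x,y₀) := heq
      have : lst ∈ s(x,y₀) := heq' ▸ hle
      rcases Sym2.mem_iff.mp this with h | h
      · exact hlstx h
      · exact hel (show e = s(x,lst) by rw [heq', h])
    by_cases hβx : β ∈ colorsAt' T₀ ψ₀ x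
    · -- β is present at x
      obtain ⟨f, ⟨hfT₀, hxf⟩, hψf⟩ := hβx
      obtain ⟨z, rfl⟩ : ∃ z, f = s(x,z) := by
        obtain ⟨z, h⟩ := Sym2.mem_iff_exists.mp hxf
        exact ⟨z, h⟩
      have hz : z ≠ x := by
        intro h
        exact hnd _ hfT₀.1 (by simp [h])
      by_cases hβmem : β ∈ βs
      · -- KEMPE CASE
        obtain ⟨p, q, hpq⟩ := List.append_of_mem hβmem
        obtain ⟨P, u, L', hLsplit, hlen, hfanP, hfanU⟩ := fan_split hfan hpq
        have hL'len : L'.length = q.length + 1 := by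
          have := fan_length hfanU
          simp at this
          omega
        have hL'ne : L' ≠ [] := by
          intro h; rw [h] at hL'len; simp at hL'len
        have hux : u ≠ x := fan_ne_x hfanU u (List.mem_cons_self)
        have huS : s(x,u) ∈ S := by
          apply hmem
          rw [hLsplit]
          exact List.mem_append_right _ (List.mem_cons_self)
        -- u's β-freeness in its own domain
        have hufree : β ∉ colorsAt' (S \ {s(x,u)}) ψ₀ u := by
          cases hfanU with
          | cons w βc w' ws βsc hwx hfr hS' hψe hfan' => exact hfr
        have hndsplit : (P ++ u :: L').Nodup := by rw [← hLsplit]; exact hnodup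
        have huL' : u ∉ L' := by
          have := (List.nodup_append.mp hndsplit).2.1
          exact (List.nodup_cons.mp this).1
        have hlstL' : lst ∈ L' := by
          have h1 : lst = (u :: L').getLast (by simp) := by
            rw [hlstdef]
            have : (y₀ :: rest).getLast hLne = (P ++ u :: L').getLast (by rw [← hLsplit]; exact hLne) := by
              congr 1
            rw [this, List.getLast_append_of_ne_nil _ (by simp : u :: L' ≠ [])]
          rw [h1, List.getLast_cons hL'ne]
          exact List.getLast_mem hL'ne
        have hul : u ≠ lst := fun h => huL' (h ▸ hlstL')
        -- β is not at u in T₀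
        have hbu : β ∉ colorsAt' T₀ ψ₀ u := by
          by_cases hPnil : P = []
          · have huy : u = y₀ := by
              rw [hPnil] at hLsplit
              simp at hLsplit
              exact hLsplit.1.symm
            rw [hT₀, ← huy]
            exact hufree
          · have hPlen : 1 ≤ P.length := by
              cases P with
              | nil => exact absurd rfl hPnil
              | cons _ _ => simp
            have hplen : p ≠ [] := by
              intro h
              rw [h, List.length_nil] at hlen
              omega
            have h2len : 2 ≤ (P ++ [u]).length := by
              rw [List.length_append, List.length_singleton]; omega
            have hαu : ψ₀ s(x,u) ∈ p := by
              have hgl : (P ++ [u]).getLast (by simp) = u := List.getLast_concat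
              have := fan_getLast_edge_mem hfanP h2len (by simp)
              rwa [hgl] at this
            have hbp : β ∉ p := by
              have := hβnd
              rw [hpq] at this
              have hdisj := (List.nodup_append.mp this).2.2
              intro hh
              exact hdisj _ hh _ List.mem_cons_self rfl
            rintro ⟨e, ⟨heT₀, hue⟩, hce⟩
            by_cases heq : e = s(x,u)
            · rw [heq] at hce
              exact hbp (hce ▸ hαu)
            · exact hufree ⟨e, ⟨⟨heT₀.1, heq⟩, hue⟩, hce⟩
        -- pick the low color a free at x
        have hdegx : edgeDegOn T₀ x < d := by
          have h1 := edgeDegOn_diff_singleton he₀ (by simp : x ∈ s(x,y₀))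
          have h2 := hdeg x
          rw [← hT₀] at h1
          omega
        obtain ⟨a, had, hax⟩ := exists_free_color (T := T₀) (c := ψ₀) (n := d) hdegx
        have hab : a ≠ β := by
          intro h
          exact hax ⟨s(x,z), ⟨hfT₀, hxf⟩, h ▸ hψf⟩
        have han : a < n := by omega
        have haβs : a ∉ βs := fun h => hax (hβcolx a h)
        have hap : a ∉ p := fun h => haβs (hpq ▸ List.mem_append_left _ h)
        have hbulst : β ∉ colorsAt' T₀ ψ₀ lst := hβfree
        have hβnn : β < n := hβn
        by_cases hxC : x ∈ kcomp T₀ ψ₀ a β u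
        · -- CASE 2 : swap the component of lst, then shift the full fan
          have hxClst : x ∉ kcomp T₀ ψ₀ a β lst := by
            intro hx
            have hu_in : u ∈ kcomp T₀ ψ₀ a β x := kcomp_symm.mp hxC
            have hlst_in : lst ∈ kcomp T₀ ψ₀ a β x := kcomp_symm.mp hx
            have hsub : ({u, lst} : Set V) ⊆ {v | v ∈ kcomp T₀ ψ₀ a β x ∧ v ≠ x ∧
                (a ∉ colorsAt' T₀ ψ₀ v ∨ β ∉ colorsAt' T₀ ψ₀ v)} := by
              rintro v (rfl | rfl)
              · exact ⟨hu_in, hux, Or.inr hbu⟩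
              · exact ⟨hlst_in, hlstx, Or.inr hbulst⟩
            have h2card : ({u, lst} : Set V).ncard = 2 := Set.ncard_pair hul
            have hle2 := Set.ncard_le_ncard hsub (Set.toFinite _)
            have hdef := kempe_deficient _ T₀ ψ₀ a β x rfl hndT₀ huniqT₀ hab hax
            omega
          have huClst : u ∉ kcomp T₀ ψ₀ a β lst := by
            intro hu
            exact hxClst (Relation.ReflTransGen.trans hu hxC)
          set ψ₁ := kswap T₀ ψ₀ a β lst with hψ₁
          have hprop₁ : EdgeProperOn T₀ ψ₁ n := kswap_proper hψ₀ hndT₀ han hβnn hab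
          have hcost₁ : {e | e ∈ T₀ ∧ d ≤ ψ₁ e}.ncard
              ≤ {e | e ∈ T₀ ∧ d ≤ ψ₀ e}.ncard + 1 := kswap_cost hψ₀ hndT₀ hab had hbulst
          have hax₁ : a ∉ colorsAt' T₀ ψ₁ x := by
            rw [hψ₁, colorsAt'_kswap_outside hndT₀ hxClst]
            exact hax
          have halst₁ : a ∉ colorsAt' T₀ ψ₁ lst := kswap_missing hab self_mem_kcomp hbulst
          -- the fan survives the swap
          have hzipu : (u, β) ∈ (y₀ :: rest).zip βs := by
            rw [hLsplit, hpq, List.zip_append hlen]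
            exact List.mem_append_right _ (List.mem_cons_self)
          have hfan₁ : Fan S x ψ₁ (y₀ :: rest) βs := by
            apply fan_transfer_pairs hfan
            · intro v hv
              have hvy : v ≠ y₀ := by
                intro h
                have := (List.nodup_cons.mp hnodup).1
                exact this (h ▸ hv)
              have hvx : v ≠ x := fan_ne_x hfan v (List.mem_cons_of_mem _ hv)
              have hvT₀ : s(x,v) ∈ T₀ := by
                refine ⟨hmem v (List.mem_cons_of_mem _ hv), ?_⟩
                intro hh
                exact hvy (by
                  rcases Sym2.eq_iff.mp hh with ⟨_, h2⟩ | ⟨h1, h2⟩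
                  · exact h2
                  · exact absurd h2 hvx)
              exact kswap_eq_outside hndT₀ hxClst hvT₀ (by simp)
            · intro v γ hzip hold
              have hγβs : γ ∈ βs := (List.of_mem_zip hzip).2
              by_cases hγa : γ = a
              · exact absurd (hγa ▸ hγβs) haβs
              · by_cases hγβ : γ = β
                · -- v must be u, whose edges are untouched
                  have hvu : v = u := zip_right_unique _ _ hβnd v u γ hzip (hγβ.symm ▸ hzipu)
                  subst hvu
                  rintro ⟨e, ⟨⟨heS, heu⟩, hue⟩, hce⟩
                  have heT₀ : e ∈ T₀ := by
                    refine ⟨heS, ?_⟩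
                    intro hh
                    have hh' : e = s(x,y₀) := hh
                    have hu' : v ∈ s(x,y₀) := hh' ▸ hue
                    rcases Sym2.mem_iff.mp hu' with h | h
                    · exact hux h
                    · exact heu (show e = s(x,v) by rw [hh', h])
                  rw [hψ₁, kswap_eq_outside hndT₀ huClst heT₀ hue] at hce
                  exact hold ⟨e, ⟨⟨heS, heu⟩, hue⟩, hce⟩
                · -- γ avoids both swap colors : pointwise
                  rintro ⟨e, ⟨⟨heS, hev⟩, hve⟩, hce⟩
                  apply hold
                  refine ⟨e, ⟨⟨heS, hev⟩, hve⟩, ?_⟩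
                  by_cases heT₀ : e ∈ T₀
                  · rcases kswap_mem_ab (T := T₀) (c := ψ₀) (a := a) (b := β)
                      (u := lst) (e := e) with h | ⟨h1, h2⟩ | ⟨h1, h2⟩
                    · rw [hψ₁, h] at hce; exact hce
                    · rw [hψ₁, h2] at hce; exact absurd hce.symm hγβ
                    · rw [hψ₁, h2] at hce; exact absurd hce.symm hγa
                  · rw [hψ₁, kswap_eq_of_not_mem heT₀] at hce
                    exact hce
          obtain ⟨ψ₂, g1, g2, g3, g4⟩ := shift_exec rest y₀ βs ψ₁ hfan₁
            (by rw [← hT₀]; exact hprop₁) hmem hnodup hβlt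
          have hlsteq : (y₀ :: rest).getLast (by simp) = lst := by rw [hlstdef]
          rw [hlsteq] at g1 g2 g3 g4
          have hfx : a ∉ colorsAt' (S \ {s(x,lst)}) ψ₂ x := by
            rw [g2, ← hT₀]
            exact hax₁
          have hflst : a ∉ colorsAt' (S \ {s(x,lst)}) ψ₂ lst := by
            rintro ⟨e, ⟨heD, hle⟩, hce⟩
            have hmem' : e ∈ {e | e ∈ S \ {s(x,lst)} ∧ ψ₂ e = a} := ⟨heD, hce⟩
            rw [g4 a haβs] at hmem'
            exact halst₁ ⟨e, ⟨hmem'.1, hle⟩, hmem'.2⟩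
          obtain ⟨hpropS, hcount⟩ := color_last (d := d) hlstS g1 han hfx hflst
          rw [if_neg (by omega : ¬ d ≤ a), add_zero] at hcount
          refine ⟨_, hpropS, le_trans hcount ?_⟩
          rw [g3]
          exact hcost₁
        · -- CASE 1 : shift the truncated fan, then swap the component of u
          obtain ⟨rest', hPu⟩ : ∃ rest', P ++ [u] = y₀ :: rest' := by
            cases P with
            | nil =>
              have hL2 := hLsplit
              rw [List.nil_append] at hL2
              injection hL2.symm with h1 _
              exact ⟨[], by simp [h1]⟩
            | cons a' P'' =>
              have hL2 := hLsplit
              rw [List.cons_append] at hL2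
              injection hL2.symm with h1 _
              exact ⟨P'' ++ [u], by rw [List.cons_append, h1.symm]⟩
          have hfanP' : Fan S x ψ₀ (y₀ :: rest') p := hPu ▸ hfanP
          have hsubl : (P ++ [u]).Sublist (P ++ u :: L') :=
            (List.singleton_sublist.mpr ((List.mem_cons_self (a := u) (l := L')))).append_left P
          have hsubmem : ∀ v ∈ y₀ :: rest', s(x,v) ∈ S := by
            intro v hv
            apply hmem
            rw [hLsplit]
            exact hsubl.subset (hPu ▸ hv)
          have hsubnodup : (y₀ :: rest').Nodup := by
            rw [← hPu]
            exact (hndsplit.sublist hsubl)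
          have hplt : ∀ γ ∈ p, γ < n := fun γ hγ => hβlt γ (hpq ▸ List.mem_append_left _ hγ)
          obtain ⟨ψ', g1, g2, g3, g4⟩ := shift_exec rest' y₀ p ψ₀ hfanP'
            (by rw [← hT₀]; exact hψ₀) hsubmem hsubnodup hplt
          have hgl : (y₀ :: rest').getLast (by simp) = u := by
            have h1 : ∀ (l : List V) (h : l ≠ []), l = P ++ [u] → l.getLast h = u := by
              intro l h hq
              subst hq
              exact List.getLast_concat
            exact h1 _ _ hPu.symm
          rw [hgl] at g1 g2 g3 g4
          have hbp : β ∉ p := by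
            have := hβnd
            rw [hpq] at this
            have hdisj := (List.nodup_append.mp this).2.2
            intro hh
            exact hdisj _ hh _ List.mem_cons_self rfl
          have ca := g4 a hap
          have cb := g4 β hbp
          have hcomp : kcomp (S \ {s(x,u)}) ψ' a β u = kcomp T₀ ψ₀ a β u := by
            apply kcomp_congr
            · rw [ca, hT₀]
            · rw [cb, hT₀]
          have hxC' : x ∉ kcomp (S \ {s(x,u)}) ψ' a β u := by
            rw [hcomp]; exact hxC
          have hbu' : β ∉ colorsAt' (S \ {s(x,u)}) ψ' u := by
            rintro ⟨e, ⟨heD, hue⟩, hce⟩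
            have hmem' : e ∈ {e | e ∈ S \ {s(x,u)} ∧ ψ' e = β} := ⟨heD, hce⟩
            rw [cb] at hmem'
            exact hbu ⟨e, ⟨hmem'.1, hue⟩, hmem'.2⟩
          have hax' : a ∉ colorsAt' (S \ {s(x,u)}) ψ' x := by
            rw [g2, ← hT₀]; exact hax
          have hnd' : ∀ e ∈ S \ {s(x,u)}, ¬ e.IsDiag := fun e he => hnd e he.1
          set ψ'' := kswap (S \ {s(x,u)}) ψ' a β u with hψ''
          have hprop'' : EdgeProperOn (S \ {s(x,u)}) ψ'' n :=
            kswap_proper g1 hnd' han hβnn hab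
          have hcost'' : {e | e ∈ S \ {s(x,u)} ∧ d ≤ ψ'' e}.ncard
              ≤ {e | e ∈ S \ {s(x,u)} ∧ d ≤ ψ' e}.ncard + 1 :=
            kswap_cost g1 hnd' hab had hbu'
          have hfx : a ∉ colorsAt' (S \ {s(x,u)}) ψ'' x := by
            rw [hψ'', colorsAt'_kswap_outside hnd' hxC']
            exact hax'
          have hfu : a ∉ colorsAt' (S \ {s(x,u)}) ψ'' u :=
            kswap_missing hab self_mem_kcomp hbu'
          obtain ⟨hpropS, hcount⟩ := color_last (d := d) huS hprop'' han hfx hfu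
          rw [if_neg (by omega : ¬ d ≤ a), add_zero] at hcount
          refine ⟨_, hpropS, le_trans hcount (le_trans hcost'' ?_)⟩
          rw [g3]
      · -- FRESH CASE : extend the fan by z
        have hzL : z ∉ y₀ :: rest := by
          intro hzin
          rcases List.mem_cons.mp hzin with rfl | hzin
          · exact hfT₀.2 rfl
          · exact hβmem (hψf ▸ fan_edge_colors hfan z hzin)
        have hfan' : Fan S x ψ₀ ((y₀ :: rest) ++ [z]) (βs ++ [β]) :=
          fan_snoc hfan hLne hz hfreedom hfT₀.1 hψf
        have hshape : (y₀ :: rest) ++ [z] = y₀ :: (rest ++ [z]) := by simp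
        apply ih (rest ++ [z]) (βs ++ [β]) (hshape ▸ hfan')
        · rw [← hshape, List.nodup_append]
          exact ⟨hnodup, List.nodup_singleton z, by
            intro v hv w hw' hvw
            rw [List.mem_singleton] at hw'
            subst hw'
            exact hzL (hvw ▸ hv)⟩
        · rw [List.nodup_append]
          exact ⟨hβnd, List.nodup_singleton β, by
            intro γ hγ γ' hγ' hγγ
            rw [List.mem_singleton] at hγ'
            subst hγ'
            exact hβmem (hγγ ▸ hγ)⟩
        · intro γ hγ
          rcases List.mem_append.mp hγ with h | h
          · exact hβlt γ h
          · rw [List.mem_singleton] at h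
            exact h ▸ hβn
        · intro γ hγ
          rcases List.mem_append.mp hγ with h | h
          · exact hβcolx γ h
          · rw [List.mem_singleton] at h
            exact ⟨s(x,z), ⟨hfT₀, hxf⟩, h ▸ hψf⟩
        · intro v hv
          rw [← hshape] at hv
          rcases List.mem_append.mp hv with h | h
          · exact hmem v h
          · rw [List.mem_singleton] at h
            exact h ▸ hfT₀.1
        · rw [List.length_append, List.length_singleton]
          omega
    · -- CASE 0 : β free at both x and lst
      obtain ⟨ψ', g1, g2, g3, g4⟩ := shift_exec rest y₀ βs ψ₀ hfan
        (by rw [← hT₀]; exact hψ₀) hmem hnodup hβlt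
      have hlsteq : (y₀ :: rest).getLast (by simp) = lst := by rw [hlstdef]
      rw [hlsteq] at g1 g2 g3 g4
      have hββs : β ∉ βs := fun h => hβx (hβcolx β h)
      have hfx : β ∉ colorsAt' (S \ {s(x,lst)}) ψ' x := by
        rw [g2, ← hT₀]
        exact hβx
      have hflst : β ∉ colorsAt' (S \ {s(x,lst)}) ψ' lst := by
        rintro ⟨e, ⟨heD, hle⟩, hce⟩
        have hmem' : e ∈ {e | e ∈ S \ {s(x,lst)} ∧ ψ' e = β} := ⟨heD, hce⟩
        rw [g4 β hββs] at hmem'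
        exact hβfree ⟨e, ⟨hmem'.1, hle⟩, hmem'.2⟩
      obtain ⟨hpropS, hcount⟩ := color_last (d := d) hlstS g1 hβn hfx hflst
      refine ⟨_, hpropS, le_trans hcount ?_⟩
      rw [g3]
      show {e | e ∈ S \ {s(x,y₀)} ∧ d ≤ ψ₀ e}.ncard + (if d ≤ β then 1 else 0)
          ≤ {e | e ∈ S \ {s(x,y₀)} ∧ d ≤ ψ₀ e}.ncard + 1
      split <;> omega

/-- extension lemma : one uncolored edge can be colored at cost ≤ 1 high edge -/
lemma extend_one {S : Set (Sym2 V)} {x y₀ : V} {ψ₀ : Sym2 V → ℕ} {d t : ℕ}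
    (hnd : ∀ e ∈ S, ¬ e.IsDiag) (hdeg : ∀ v, edgeDegOn S v ≤ d) (ht : 1 ≤ t)
    (hy₀ : y₀ ≠ x) (he₀ : s(x,y₀) ∈ S)
    (hψ₀ : EdgeProperOn (S \ {s(x,y₀)}) ψ₀ (d + t)) :
    ∃ c : Sym2 V → ℕ, EdgeProperOn S c (d + t) ∧
      {e | e ∈ S ∧ d ≤ c e}.ncard
        ≤ {e | e ∈ S \ {s(x,y₀)} ∧ d ≤ ψ₀ e}.ncard + 1 := by
  apply fan_rec hnd hdeg ht hy₀ he₀ hψ₀ (d + t + 1) [] []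
    (Fan.single y₀ hy₀) (by simp) (by simp) (by simp) (by simp)
  · intro v hv
    rw [List.mem_singleton] at hv
    exact hv ▸ he₀
  · simp
end FanRec
section MaxCol
variable [Fintype V]

noncomputable def maxCol (S : Set (Sym2 V)) (d : ℕ) : ℕ :=
  sSup {m | ∃ T, T ⊆ S ∧ EdgeColorableOn T d ∧ T.ncard = m}

lemma maxCol_spec (S : Set (Sym2 V)) (d : ℕ) :
    ∃ T, T ⊆ S ∧ EdgeColorableOn T d ∧ T.ncard = maxCol S d := by
  have hne : {m | ∃ T, T ⊆ S ∧ EdgeColorableOn T d ∧ T.ncard = m}.Nonempty := by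
    refine ⟨0, ∅, Set.empty_subset _, ⟨fun _ => 0, ?_, ?_⟩, by simp⟩
    · intro e he; exact absurd he (Set.notMem_empty e)
    · intro e he; exact absurd he (Set.notMem_empty e)
  have hbdd : BddAbove {m | ∃ T, T ⊆ S ∧ EdgeColorableOn T d ∧ T.ncard = m} := by
    refine ⟨S.ncard, ?_⟩
    rintro m ⟨T, hT, _, rfl⟩
    exact Set.ncard_le_ncard hT (Set.toFinite _)
  exact Nat.sSup_mem hne hbdd

lemma le_maxCol {S T : Set (Sym2 V)} {d : ℕ} (hT : T ⊆ S) (hc : EdgeColorableOn T d) :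
    T.ncard ≤ maxCol S d := by
  apply le_csSup
  · refine ⟨S.ncard, ?_⟩
    rintro m ⟨T', hT', _, rfl⟩
    exact Set.ncard_le_ncard hT' (Set.toFinite _)
  · exact ⟨T, hT, hc, rfl⟩

lemma maxCol_le (S : Set (Sym2 V)) (d : ℕ) : maxCol S d ≤ S.ncard := by
  obtain ⟨T, hT, _, hcard⟩ := maxCol_spec S d
  rw [← hcard]
  exact Set.ncard_le_ncard hT (Set.toFinite _)

lemma count_split (S : Set (Sym2 V)) (c : Sym2 V → ℕ) (d : ℕ) :
    {e | e ∈ S ∧ c e < d}.ncard + {e | e ∈ S ∧ d ≤ c e}.ncard = S.ncard := by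
  rw [← Set.ncard_union_eq (by
      rw [Set.disjoint_left]
      rintro e ⟨_, h1⟩ ⟨_, h2⟩
      omega) (Set.toFinite _) (Set.toFinite _)]
  congr 1
  ext e
  constructor
  · rintro (⟨he, _⟩ | ⟨he, _⟩) <;> exact he
  · intro he
    by_cases h : c e < d
    · exact Or.inl ⟨he, h⟩
    · exact Or.inr ⟨he, by omega⟩

lemma sym2_nondiag {e : Sym2 V} (h : ¬ e.IsDiag) : ∃ x y, y ≠ x ∧ e = s(x,y) := by
  induction e with
  | _ x y => exact ⟨x, y, fun hh => h (by simp [hh]), rfl⟩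

/-- the main recoloring theorem : a `(d+t)`-colorable graph with degrees ≤ `d`
has a proper `(d+t)`-coloring whose low color classes cover a maximum
`d`-colorable subgraph -/
lemma good_coloring {d t : ℕ} :
    ∀ (N : ℕ) (S : Set (Sym2 V)), S.ncard = N →
    (∀ e ∈ S, ¬ e.IsDiag) → (∀ v, edgeDegOn S v ≤ d) →
    EdgeColorableOn S (d + t) →
    ∃ c, EdgeProperOn S c (d + t) ∧
      maxCol S d ≤ {e | e ∈ S ∧ c e < d}.ncard := by
  intro N
  induction N using Nat.strong_induction_on with
  | _ N IH =>
    intro S hN hnd hdeg hcol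
    by_cases hSd : EdgeColorableOn S d
    · obtain ⟨c, hc⟩ := hSd
      refine ⟨c, ⟨fun e he => by have := hc.1 e he; omega, hc.2⟩, ?_⟩
      have : {e | e ∈ S ∧ c e < d} = S := by
        ext e
        exact ⟨fun h => h.1, fun h => ⟨h, hc.1 e h⟩⟩
      rw [this]
      exact maxCol_le S d
    · obtain ⟨T₀, hT₀S, hT₀col, hT₀card⟩ := maxCol_spec S d
      have hTne : T₀ ≠ S := by
        rintro rfl
        exact hSd hT₀col
      obtain ⟨e₀, he₀S, he₀T⟩ : ∃ e₀, e₀ ∈ S ∧ e₀ ∉ T₀ := by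
        by_contra h
        push_neg at h
        exact hTne (Set.Subset.antisymm hT₀S h)
      obtain ⟨x, y, hyx, rfl⟩ := sym2_nondiag (hnd e₀ he₀S)
      have ht : 1 ≤ t := by
        rcases Nat.eq_zero_or_pos t with rfl | h
        · exact absurd (by simpa using hcol) hSd
        · exact h
      set S' := S \ {s(x,y)} with hS'
      have hS'sub : S' ⊆ S := Set.diff_subset
      have hcard' : S'.ncard = N - 1 := by
        rw [hS', Set.ncard_diff_singleton_of_mem he₀S, hN]
      have hNpos : 1 ≤ N := by
        rw [← hN]
        exact (Set.ncard_pos (Set.toFinite _)).mpr ⟨_, he₀S⟩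
      obtain ⟨c', hc', hlow'⟩ := IH (N-1) (by omega) S' hcard'
        (fun e he => hnd e (hS'sub he)) (fun v => le_trans (edgeDegOn_mono hS'sub v) (hdeg v))
        (colorableOn_mono_set hS'sub hcol)
      have hmc : maxCol S' d = maxCol S d := by
        apply le_antisymm
        · obtain ⟨T, hT, hTc, hTcard⟩ := maxCol_spec S' d
          rw [← hTcard]
          exact le_maxCol (hT.trans hS'sub) hTc
        · rw [← hT₀card]
          apply le_maxCol _ hT₀col
          intro e he
          refine ⟨hT₀S he, ?_⟩
          intro hh
          have : e = s(x,y) := hh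
          exact he₀T (this ▸ he)
      obtain ⟨c, hc, hhigh⟩ := extend_one hnd hdeg ht hyx he₀S hc'
      refine ⟨c, hc, ?_⟩
      have h1 := count_split S c d
      have h2 := count_split S' c' d
      have h3 : {e | e ∈ S \ {s(x,y)} ∧ d ≤ c' e}.ncard
          = {e | e ∈ S' ∧ d ≤ c' e}.ncard := rfl
      rw [h3] at hhigh
      rw [← hmc]
      omega
end MaxCol
section Assembly
variable [Fintype V]

lemma edgeDegOn_edgeSet (G : SimpleGraph V) [DecidableRel G.Adj] (v : V) :
    edgeDegOn G.edgeSet v = G.degree v := by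
  classical
  have h : {e | e ∈ G.edgeSet ∧ v ∈ e} = G.incidenceSet v := by
    ext e; simp [SimpleGraph.incidenceSet]
  rw [edgeDegOn, h, ← Nat.card_coe_set_eq, Nat.card_eq_fintype_card]
  exact G.card_incidenceSet_eq_degree v

lemma edgeDegOn_le_maxDegree (G : SimpleGraph V) [DecidableRel G.Adj] (v : V) :
    edgeDegOn G.edgeSet v ≤ G.maxDegree := by
  rw [edgeDegOn_edgeSet]
  exact G.degree_le_maxDegree v

lemma maxDegree_le_chromIndex (G : SimpleGraph V) [DecidableRel G.Adj] :
    G.maxDegree ≤ edgeChromIndex G.edgeSet := by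
  classical
  cases isEmpty_or_nonempty V with
  | inl h =>
    have h0 : G.maxDegree = 0 :=
      Nat.le_antisymm (G.maxDegree_le_of_forall_degree_le 0 (fun v => (h.false v).elim))
        (Nat.zero_le _)
    omega
  | inr h =>
    obtain ⟨v, hv⟩ := G.exists_maximal_degree_vertex
    obtain ⟨c, hc⟩ := colorableOn_chromIndex G.edgeSet
    have hinj : Set.InjOn c {e | e ∈ G.edgeSet ∧ v ∈ e} := by
      rintro e ⟨he, hve⟩ f ⟨hf, hvf⟩ hcf
      by_contra hne
      exact hc.2 e he f hf hne ⟨v, hve, hvf⟩ hcf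
    have h1 : (colorsAt' G.edgeSet c v).ncard = edgeDegOn G.edgeSet v :=
      Set.ncard_image_of_injOn hinj
    have h2 : colorsAt' G.edgeSet c v ⊆ ↑(Finset.range (edgeChromIndex G.edgeSet)) := by
      rintro γ ⟨e, ⟨he, _⟩, rfl⟩
      simp only [Finset.coe_range, Set.mem_Iio]
      exact hc.1 e he
    have h3 := Set.ncard_le_ncard h2 (Set.toFinite _)
    rw [h1] at h3
    simp only [Set.ncard_coe_finset, Finset.card_range] at h3
    rw [hv, ← edgeDegOn_edgeSet]
    exact h3

lemma removalNumber_eq (G : SimpleGraph V) [DecidableRel G.Adj] :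
    removalNumber G = G.edgeSet.ncard - maxCol G.edgeSet G.maxDegree := by
  classical
  set E := G.edgeSet with hE
  set Δ := G.maxDegree with hΔ
  set M := maxCol E Δ with hM
  have hnd : ∀ e ∈ E, ¬ e.IsDiag := fun e he => G.not_isDiag_of_mem_edgeSet he
  obtain ⟨T₀, hT₀S, hT₀col, hT₀card⟩ := maxCol_spec E Δ
  have hMle : M ≤ E.ncard := maxCol_le E Δ
  have hmemA : E.ncard - M ∈ {n | ∃ D : Set (Sym2 V), D ⊆ E ∧ D.ncard = n ∧
      edgeChromIndex (E \ D) = Δ} := by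
    refine ⟨E \ T₀, Set.diff_subset, ?_, ?_⟩
    · rw [Set.ncard_diff hT₀S (Set.toFinite _), hT₀card]
    · have hcancel : E \ (E \ T₀) = T₀ := Set.diff_diff_cancel_left hT₀S
      rw [hcancel]
      apply Nat.le_antisymm
      · exact chromIndex_le_iff.mpr hT₀col
      · by_contra hlt
        push_neg at hlt
        have hcolT := colorableOn_chromIndex T₀
        by_cases hTE : T₀ = E
        · have h1 : edgeChromIndex E ≤ edgeChromIndex T₀ := by
            apply Nat.sInf_le
            exact hTE ▸ hcolT
          have hDC : Δ ≤ edgeChromIndex E := maxDegree_le_chromIndex G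
          omega
        · obtain ⟨f, hfE, hfT⟩ : ∃ f, f ∈ E ∧ f ∉ T₀ := by
            by_contra hcon
            push_neg at hcon
            exact hTE (Set.Subset.antisymm hT₀S hcon)
          obtain ⟨c₀, hc₀⟩ := hcolT
          have hins := properOn_insert_fresh hc₀ hfT
          have hcolins : EdgeColorableOn (insert f T₀) Δ := by
            refine colorableOn_mono_nat ?_ ⟨_, hins⟩
            omega
          have hsub : insert f T₀ ⊆ E := Set.insert_subset hfE hT₀S
          have := le_maxCol hsub hcolins
          rw [Set.ncard_insert_of_notMem hfT (Set.toFinite _), hT₀card] at this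
          omega
  apply Nat.le_antisymm
  · exact Nat.sInf_le hmemA
  · apply le_csInf ⟨_, hmemA⟩
    rintro n ⟨D, hDE, rfl, hchrom⟩
    have hcol : EdgeColorableOn (E \ D) Δ := by
      rw [← hchrom]
      exact colorableOn_chromIndex _
    have h1 := le_maxCol (Set.diff_subset : E \ D ⊆ E) hcol
    rw [Set.ncard_diff hDE (Set.toFinite _)] at h1
    have h2 : D.ncard ≤ E.ncard := Set.ncard_le_ncard hDE (Set.toFinite _)
    omega

lemma mem_B_ge (G : SimpleGraph V) [DecidableRel G.Adj] (m : ℕ)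
    (hm : m ∈ {m | ∃ c : Sym2 V → ℕ,
      EdgeProperOn G.edgeSet c (edgeChromIndex G.edgeSet) ∧
      ∃ K : Finset ℕ, (∀ x ∈ K, x < edgeChromIndex G.edgeSet) ∧
        K.card = edgeChromIndex G.edgeSet - G.maxDegree ∧
        {e | e ∈ G.edgeSet ∧ c e ∈ K}.ncard = m}) :
    G.edgeSet.ncard - maxCol G.edgeSet G.maxDegree ≤ m := by
  classical
  obtain ⟨c, hc, K, hKlt, hKcard, hKm⟩ := hm
  set E := G.edgeSet with hE
  set Δ := G.maxDegree with hΔ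
  set χ := edgeChromIndex E with hχ
  have hΔχ : Δ ≤ χ := maxDegree_le_chromIndex G
  set A' : Finset ℕ := Finset.range χ \ K with hA'
  have hKsub : K ⊆ Finset.range χ := fun γ hγ => Finset.mem_range.mpr (hKlt γ hγ)
  have hA'card : A'.card = Δ := by
    rw [hA', Finset.card_sdiff_of_subset hKsub, Finset.card_range, hKcard]
    omega
  set T : Set (Sym2 V) := {e | e ∈ E ∧ c e ∉ K} with hT
  have hTE : T ⊆ E := fun e he => he.1
  have hTA' : ∀ e ∈ T, c e ∈ A' := by
    rintro e ⟨he, hek⟩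
    rw [hA', Finset.mem_sdiff]
    exact ⟨Finset.mem_range.mpr (hc.1 e he), hek⟩
  have hTcol : EdgeColorableOn T Δ := by
    have hprop : EdgeProperOn T c χ := ⟨fun e he => hc.1 e (hTE he),
      fun e he f hf => hc.2 e (hTE he) f (hTE hf)⟩
    have hginj : Set.InjOn (fun γ : ℕ => if h : γ ∈ A' then
        ((A'.orderIsoOfFin hA'card).symm ⟨γ, h⟩).val else 0) ↑A' := by
      intro γ1 h1 γ2 h2 heq
      simp only [Finset.mem_coe] at h1 h2
      have heq' : (if h : γ1 ∈ A' then ((A'.orderIsoOfFin hA'card).symm ⟨γ1, h⟩).val else 0)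
          = (if h : γ2 ∈ A' then ((A'.orderIsoOfFin hA'card).symm ⟨γ2, h⟩).val else 0) := heq
      rw [dif_pos h1, dif_pos h2] at heq'
      have hinj := (A'.orderIsoOfFin hA'card).symm.injective
        (Fin.ext heq' : (A'.orderIsoOfFin hA'card).symm ⟨γ1, h1⟩
          = (A'.orderIsoOfFin hA'card).symm ⟨γ2, h2⟩)
      exact Subtype.mk_eq_mk.mp hinj
    have hgbd : ∀ γ ∈ A', (fun γ : ℕ => if h : γ ∈ A' then
        ((A'.orderIsoOfFin hA'card).symm ⟨γ, h⟩).val else 0) γ < Δ := by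
      intro γ hγ
      simp only
      rw [dif_pos hγ]
      exact Fin.isLt _
    exact ⟨_, properOn_relabel hprop A' hTA' _ hginj hgbd⟩
  have hTM := le_maxCol hTE hTcol
  have hsplit : T.ncard + {e | e ∈ E ∧ c e ∈ K}.ncard = E.ncard := by
    rw [← Set.ncard_union_eq (by
        rw [Set.disjoint_left]
        rintro e ⟨_, h1⟩ ⟨_, h2⟩
        exact h1 h2) (Set.toFinite _) (Set.toFinite _)]
    congr 1
    ext e
    constructor
    · rintro (⟨he, _⟩ | ⟨he, _⟩) <;> exact he
    · intro he
      by_cases h : c e ∈ K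
      · exact Or.inr ⟨he, h⟩
      · exact Or.inl ⟨he, h⟩
  rw [hKm] at hsplit
  omega
end Assembly

/-- Theorem 11 of the paper. For every finite simple graph
`G` one has `r_e(G) = r'_e(G)`. -/
theorem removalNumber_eq_colorClassRemovalNumber
    [Fintype V] (G : SimpleGraph V) [DecidableRel G.Adj] :
    removalNumber G = colorClassRemovalNumber G := by
  classical
  set E := G.edgeSet with hE
  set Δ := G.maxDegree with hΔ
  set χ := edgeChromIndex E with hχ
  set M := maxCol E Δ with hM
  have hΔχ : Δ ≤ χ := maxDegree_le_chromIndex G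
  have hnd : ∀ e ∈ E, ¬ e.IsDiag := fun e he => G.not_isDiag_of_mem_edgeSet he
  have hdeg : ∀ v, edgeDegOn E v ≤ Δ := fun v => edgeDegOn_le_maxDegree G v
  -- exhibit a member of the B set with value ≤ ncard E - M
  have hmemB : ∃ m₀, m₀ ∈ {m | ∃ c : Sym2 V → ℕ,
      EdgeProperOn E c χ ∧
      ∃ K : Finset ℕ, (∀ x ∈ K, x < χ) ∧ K.card = χ - Δ ∧
        {e | e ∈ E ∧ c e ∈ K}.ncard = m} ∧ m₀ ≤ E.ncard - M := by
    rcases Nat.eq_or_lt_of_le hΔχ with heq | hlt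
    · -- class 1 : χ = Δ
      obtain ⟨c, hc⟩ := colorableOn_chromIndex E
      refine ⟨0, ⟨c, hc, ∅, by simp, by simp; omega, ?_⟩, Nat.zero_le _⟩
      simp only [Finset.notMem_empty]
      rw [Set.ncard_eq_zero (Set.toFinite _)]
      ext e
      simp
    · -- class 2 : χ = Δ + t with t ≥ 1
      set t := χ - Δ with htdef
      have hχeq : Δ + t = χ := by omega
      have hcolE : EdgeColorableOn E (Δ + t) := by
        rw [hχeq]
        exact colorableOn_chromIndex E
      obtain ⟨c, hc, hMlow⟩ := good_coloring E.ncard E rfl hnd hdeg hcolE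
      rw [hχeq] at hc
      refine ⟨{e | e ∈ E ∧ Δ ≤ c e}.ncard, ⟨c, hc, Finset.Ico Δ χ, ?_, ?_, ?_⟩, ?_⟩
      · intro γ hγ
        exact (Finset.mem_Ico.mp hγ).2
      · rw [Nat.card_Ico]
      · congr 1
        ext e
        simp only [Set.mem_setOf_eq, Finset.mem_Ico, and_congr_right_iff]
        intro he
        constructor
        · rintro ⟨h1, _⟩; exact h1
        · intro h1; exact ⟨h1, hc.1 e he⟩
      · have hsplit := count_split E c Δ
        rw [← hM] at hMlow
        omega
  obtain ⟨m₀, hm₀B, hm₀le⟩ := hmemB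
  rw [removalNumber_eq G]
  apply Nat.le_antisymm
  · have hne : {m | ∃ c : Sym2 V → ℕ,
        EdgeProperOn E c χ ∧
        ∃ K : Finset ℕ, (∀ x ∈ K, x < χ) ∧ K.card = χ - Δ ∧
          {e | e ∈ E ∧ c e ∈ K}.ncard = m}.Nonempty := ⟨m₀, hm₀B⟩
    exact mem_B_ge G _ (Nat.sInf_mem hne)
  · exact le_trans (Nat.sInf_le hm₀B) hm₀le
end

section
/- Let G be a finite simple graph and H a maximum Δ(G)-edge-colorable subgraph of G. Then Δ(H) = Δ(G); in particular χ'(H) = Δ(H), i.e. H is class I. -/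
variable {V : Type}

/-- color `γ` is a legal missing color at `x`. -/
def MissingAt (S : Set (Sym2 V)) (c : Sym2 V → ℕ) (n : ℕ) (x : V) (γ : ℕ) : Prop :=
  γ < n ∧ ∀ f ∈ S, x ∈ f → c f ≠ γ

lemma exists_missing [Fintype V] {S : Set (Sym2 V)} (c : Sym2 V → ℕ) {n : ℕ} {x : V}
    (hx : {f | f ∈ S ∧ x ∈ f}.ncard < n) : ∃ γ, MissingAt S c n x γ := by
  classical
  by_contra h
  simp only [MissingAt] at h
  push_neg at h
  have hsub : (Finset.range n : Set ℕ) ⊆ c '' {f | f ∈ S ∧ x ∈ f} := by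
    intro γ hγ
    simp only [Finset.coe_range, Set.mem_Iio] at hγ
    obtain ⟨f, hf, hxf, hcf⟩ := h γ hγ
    exact ⟨f, ⟨hf, hxf⟩, hcf⟩
  have h1 : ((Finset.range n : Set ℕ)).ncard ≤ (c '' {f | f ∈ S ∧ x ∈ f}).ncard :=
    Set.ncard_le_ncard hsub ((Set.toFinite _).image c)
  rw [Set.ncard_coe_finset, Finset.card_range] at h1
  have h2 := Set.ncard_image_le (f := c) (s := {f | f ∈ S ∧ x ∈ f}) (Set.toFinite _)
  omega

/-- Extend a coloring by one edge when a color is missing at both endpoints. -/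
lemma extend_coloring {S : Set (Sym2 V)} {c : Sym2 V → ℕ} {n : ℕ} {u v : V} {γ : ℕ}
    (hc : EdgeProperOn S c n) (he : s(u,v) ∉ S)
    (hu : MissingAt S c n u γ) (hv : MissingAt S c n v γ) :
    EdgeColorableOn (insert s(u,v) S) n := by
  classical
  refine ⟨fun g => if g = s(u,v) then γ else c g, ?_, ?_⟩
  · intro e hee
    rcases hee with rfl | heS
    · simpa using hu.1
    · have : e ≠ s(u,v) := fun h => he (h ▸ heS)
      simp only [this, if_false]
      exact hc.1 e heS
  · intro e hee f hfe hef ⟨w, hwe, hwf⟩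
    rcases hee with rfl | heS <;> rcases hfe with rfl | hfS
    · exact absurd rfl hef
    · have hfne : f ≠ s(u,v) := fun h => he (h ▸ hfS)
      simp only [if_pos rfl, hfne, if_false]
      have hw : w = u ∨ w = v := by simpa using hwe
      rcases hw with rfl | rfl
      · exact fun h => hu.2 f hfS hwf h.symm
      · exact fun h => hv.2 f hfS hwf h.symm
    · have hene : e ≠ s(u,v) := fun h => he (h ▸ heS)
      simp only [if_pos rfl, hene, if_false]
      have hw : w = u ∨ w = v := by simpa using hwf
      rcases hw with rfl | rfl
      · exact hu.2 e heS hwe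
      · exact hv.2 e heS hwe
    · have hene : e ≠ s(u,v) := fun h => he (h ▸ heS)
      have hfne : f ≠ s(u,v) := fun h => he (h ▸ hfS)
      simp only [hene, hfne, if_false]
      exact hc.2 e heS f hfS hef ⟨w, hwe, hwf⟩

/-- The Kempe graph: edges of `S` colored `α` or `β`. -/
def kempeG (S : Set (Sym2 V)) (c : Sym2 V → ℕ) (α β : ℕ) : SimpleGraph V where
  Adj x y := x ≠ y ∧ s(x,y) ∈ S ∧ (c s(x,y) = α ∨ c s(x,y) = β)
  symm := by
    constructor
    intro x y ⟨h1, h2, h3⟩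
    rw [Sym2.eq_swap] at h2 h3
    exact ⟨h1.symm, h2, h3⟩
  loopless := ⟨fun x h => h.1 rfl⟩

lemma kempeG_adj {S : Set (Sym2 V)} {c : Sym2 V → ℕ} {α β : ℕ} {x y : V} :
    (kempeG S c α β).Adj x y ↔ x ≠ y ∧ s(x,y) ∈ S ∧ (c s(x,y) = α ∨ c s(x,y) = β) := Iff.rfl

def swColor (α β t : ℕ) : ℕ := if t = α then β else if t = β then α else t

open Classical in
/-- Swap colors `α`, `β` on all edges meeting `K`. -/
noncomputable def kempeSwap (S : Set (Sym2 V)) (c : Sym2 V → ℕ) (α β : ℕ) (K : Set V) :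
    Sym2 V → ℕ :=
  fun g => if (∃ w, w ∈ g ∧ w ∈ K) then swColor α β (c g) else c g

/-- `K` is closed in the Kempe graph sense. -/
def KClosed (S : Set (Sym2 V)) (c : Sym2 V → ℕ) (α β : ℕ) (K : Set V) : Prop :=
  ∀ g ∈ S, (c g = α ∨ c g = β) → ∀ w ∈ g, w ∈ K → ∀ x ∈ g, x ∈ K

lemma reach_closed (S : Set (Sym2 V)) (c : Sym2 V → ℕ) (α β : ℕ) (z : V) :
    KClosed S c α β {x | (kempeG S c α β).Reachable z x} := by
  intro g hg hcg w hwg hwK x hxg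
  induction g with
  | _ a b =>
    simp only [Sym2.mem_iff] at hwg hxg
    by_cases hwx : w = x
    · exact hwx ▸ hwK
    have hadj : (kempeG S c α β).Adj w x := by
      rcases hwg with rfl | rfl <;> rcases hxg with rfl | rfl
      · exact absurd rfl hwx
      · exact kempeG_adj.mpr ⟨hwx, hg, hcg⟩
      · rw [Sym2.eq_swap] at hg hcg; exact kempeG_adj.mpr ⟨hwx, hg, hcg⟩
      · exact absurd rfl hwx
    exact hwK.trans hadj.reachable

lemma swColor_inj {α β t t' : ℕ} (h : swColor α β t = swColor α β t') : t = t' := by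
  unfold swColor at h; split_ifs at h <;> omega

lemma swColor_lt {α β t n : ℕ} (hα : α < n) (hβ : β < n) (ht : t < n) : swColor α β t < n := by
  unfold swColor; split_ifs <;> omega

lemma swap_mem_pair {S : Set (Sym2 V)} {c : Sym2 V → ℕ} {α β : ℕ} {K : Set V} (g : Sym2 V) :
    kempeSwap S c α β K g = c g ∨ kempeSwap S c α β K g = swColor α β (c g) := by
  unfold kempeSwap; split_ifs <;> simp

lemma swap_in {S : Set (Sym2 V)} {c : Sym2 V → ℕ} {α β : ℕ} {K : Set V} {x : V} {g : Sym2 V}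
    (hx : x ∈ K) (hxg : x ∈ g) : kempeSwap S c α β K g = swColor α β (c g) := by
  unfold kempeSwap; rw [if_pos ⟨x, hxg, hx⟩]

lemma swap_out {S : Set (Sym2 V)} {c : Sym2 V → ℕ} {α β : ℕ} {K : Set V}
    (hK : KClosed S c α β K) {x : V} {g : Sym2 V}
    (hx : x ∉ K) (hg : g ∈ S) (hxg : x ∈ g) : kempeSwap S c α β K g = c g := by
  unfold kempeSwap
  split_ifs with h
  · obtain ⟨w, hwg, hwK⟩ := h
    by_cases hD : c g = α ∨ c g = β
    · exact absurd (hK g hg hD w hwg hwK x hxg) hx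
    · push_neg at hD
      unfold swColor
      rw [if_neg hD.1, if_neg hD.2]
  · rfl

lemma swap_proper {S : Set (Sym2 V)} {c : Sym2 V → ℕ} {n α β : ℕ} {K : Set V}
    (hc : EdgeProperOn S c n) (hα : α < n) (hβ : β < n)
    (hK : KClosed S c α β K) : EdgeProperOn S (kempeSwap S c α β K) n := by
  constructor
  · intro e he
    rcases swap_mem_pair (S := S) (c := c) (α := α) (β := β) (K := K) e with h | h <;> rw [h]
    · exact hc.1 e he
    · exact swColor_lt hα hβ (hc.1 e he)
  · intro e he f hf hef ⟨w, hwe, hwf⟩ heq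
    have horig := hc.2 e he f hf hef ⟨w, hwe, hwf⟩
    unfold kempeSwap at heq
    split_ifs at heq with h1 h2 h2
    · exact horig (swColor_inj heq)
    · -- e swapped, f not
      by_cases hD : c e = α ∨ c e = β
      · obtain ⟨w', hw'e, hw'K⟩ := h1
        have hwK : w ∈ K := hK e he hD w' hw'e hw'K w hwe
        exact h2 ⟨w, hwf, hwK⟩
      · push_neg at hD
        unfold swColor at heq
        rw [if_neg hD.1, if_neg hD.2] at heq
        exact horig heq
    · by_cases hD : c f = α ∨ c f = β
      · obtain ⟨w', hw'f, hw'K⟩ := h2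
        have hwK : w ∈ K := hK f hf hD w' hw'f hw'K w hwf
        exact h1 ⟨w, hwe, hwK⟩
      · push_neg at hD
        unfold swColor at heq
        rw [if_neg hD.1, if_neg hD.2] at heq
        exact horig heq
    · exact horig heq

lemma missing_swap_out {S : Set (Sym2 V)} {c : Sym2 V → ℕ} {n α β γ : ℕ} {K : Set V}
    (hK : KClosed S c α β K) {x : V} (hx : x ∉ K)
    (h : MissingAt S c n x γ) : MissingAt S (kempeSwap S c α β K) n x γ :=
  ⟨h.1, fun f hf hxf => by rw [swap_out hK hx hf hxf]; exact h.2 f hf hxf⟩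

lemma missing_swap_in {S : Set (Sym2 V)} {c : Sym2 V → ℕ} {n α β : ℕ} {K : Set V}
    (hαβ : α ≠ β) (hβ : β < n) {x : V} (hx : x ∈ K)
    (h : MissingAt S c n x α) : MissingAt S (kempeSwap S c α β K) n x β := by
  refine ⟨hβ, fun f hf hxf => ?_⟩
  rw [swap_in hx hxf]
  unfold swColor
  split_ifs with h1 h2
  · exact absurd h1 (h.2 f hf hxf)
  · exact hαβ
  · exact h2

lemma missing_swap_other {S : Set (Sym2 V)} {c : Sym2 V → ℕ} {n α β γ : ℕ} {K : Set V}
    (hγα : γ ≠ α) (hγβ : γ ≠ β) {x : V}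
    (h : MissingAt S c n x γ) : MissingAt S (kempeSwap S c α β K) n x γ := by
  refine ⟨h.1, fun f hf hxf => ?_⟩
  rcases swap_mem_pair (S := S) (c := c) (α := α) (β := β) (K := K) f with hh | hh <;> rw [hh]
  · exact h.2 f hf hxf
  · unfold swColor
    split_ifs with h1 h2
    · exact fun e => hγβ e.symm
    · exact fun e => hγα e.symm
    · exact h.2 f hf hxf

lemma swap_fix {S : Set (Sym2 V)} {c : Sym2 V → ℕ} {α β : ℕ} {K : Set V} {g : Sym2 V}
    (h1 : c g ≠ α) (h2 : c g ≠ β) : kempeSwap S c α β K g = c g := by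
  rcases swap_mem_pair (S := S) (c := c) (α := α) (β := β) (K := K) g with hh | hh <;> rw [hh]
  unfold swColor
  rw [if_neg h1, if_neg h2]

/-- A Vizing fan at `u` starting towards `v`. -/
def FanProp (S : Set (Sym2 V)) (n : ℕ) (u v : V) (c : Sym2 V → ℕ) (i : ℕ)
    (vv : ℕ → V) (aa : ℕ → ℕ) : Prop :=
  vv 0 = v ∧ (∀ l, l ≤ i → vv l ≠ u) ∧ (∀ l m, l < m → m ≤ i → vv l ≠ vv m) ∧
    (∀ l, 1 ≤ l → l ≤ i → s(u, vv l) ∈ S) ∧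
    (∀ l, l < i → c s(u, vv (l + 1)) = aa l) ∧
    (∀ l, l ≤ i → MissingAt S c n (vv l) (aa l))

open Classical in
noncomputable def recolorFn (c : Sym2 V → ℕ) (f : Sym2 V) (γ : ℕ) : Sym2 V → ℕ :=
  fun g => if g = f then γ else c g

lemma recolorFn_same {c : Sym2 V → ℕ} {f : Sym2 V} {γ : ℕ} : recolorFn c f γ f = γ := by
  unfold recolorFn; rw [if_pos rfl]

lemma recolorFn_ne {c : Sym2 V → ℕ} {f g : Sym2 V} {γ : ℕ} (h : g ≠ f) :
    recolorFn c f γ g = c g := by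
  unfold recolorFn; rw [if_neg h]

lemma recolor_proper {S : Set (Sym2 V)} {c : Sym2 V → ℕ} {n : ℕ} {u w : V} {γ : ℕ}
    (hc : EdgeProperOn S c n)
    (hu : MissingAt S c n u γ) (hw : MissingAt S c n w γ) :
    EdgeProperOn S (recolorFn c s(u,w) γ) n := by
  constructor
  · intro e he
    by_cases h : e = s(u,w)
    · rw [h, recolorFn_same]; exact hu.1
    · rw [recolorFn_ne h]; exact hc.1 e he
  · intro e he f hf hef ⟨x, hxe, hxf⟩
    by_cases h1 : e = s(u,w) <;> by_cases h2 : f = s(u,w)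
    · exact absurd (h1.trans h2.symm) hef
    · rw [h1, recolorFn_same, recolorFn_ne h2]
      subst h1
      have hx : x = u ∨ x = w := by simpa using hxe
      rcases hx with rfl | rfl
      · exact fun h => (hu.2 f hf hxf) h.symm
      · exact fun h => (hw.2 f hf hxf) h.symm
    · rw [h2, recolorFn_same, recolorFn_ne h1]
      subst h2
      have hx : x = u ∨ x = w := by simpa using hxf
      rcases hx with rfl | rfl
      · exact hu.2 e he hxe
      · exact hw.2 e he hxe
    · rw [recolorFn_ne h1, recolorFn_ne h2]
      exact hc.2 e he f hf hef ⟨x, hxe, hxf⟩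

lemma fan_rotate {S : Set (Sym2 V)} {n : ℕ} {u v : V} (he : s(u,v) ∉ S) :
    ∀ (i : ℕ) (c : Sym2 V → ℕ) (vv : ℕ → V) (aa : ℕ → ℕ) (γ : ℕ),
      EdgeProperOn S c n → FanProp S n u v c i vv aa →
      MissingAt S c n u γ → MissingAt S c n (vv i) γ →
      EdgeColorableOn (insert s(u,v) S) n := by
  classical
  intro i
  induction i with
  | zero =>
    intro c vv aa γ hc hfan hu hv
    rw [hfan.1] at hv
    exact extend_coloring hc he hu hv
  | succ i ih =>
    intro c vv aa γ hc hfan hu hv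
    obtain ⟨h0, hne, hdist, hmem, hcol, hmiss⟩ := hfan
    set f : Sym2 V := s(u, vv (i+1)) with hf
    have hfS : f ∈ S := hmem (i+1) (Nat.le_add_left 1 i) le_rfl
    have haai : c f = aa i := hcol i (Nat.lt_succ_self i)
    set c' : Sym2 V → ℕ := recolorFn c f γ with hc'
    have hvv1u : vv (i+1) ≠ u := hne (i+1) le_rfl
    have hc'p : EdgeProperOn S c' n := recolor_proper hc hu hv
    -- edges of the fan below i+1 are not f
    have hnotf : ∀ l, l ≤ i → s(u, vv l) ≠ f := by
      intro l hl hlf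
      exact hdist l (i+1) (Nat.lt_succ_of_le hl) le_rfl (Sym2.congr_right.mp hlf)
    -- vv l ∉ f for l ≤ i
    have hnotin : ∀ l, l ≤ i → vv l ∉ f := by
      intro l hl hmem'
      rw [hf, Sym2.mem_iff] at hmem'
      rcases hmem' with h | h
      · exact hne l (le_trans hl (Nat.le_succ i)) h
      · exact hdist l (i+1) (Nat.lt_succ_of_le hl) le_rfl h
    have hfan' : FanProp S n u v c' i vv aa := by
      refine ⟨h0, fun l hl => hne l (le_trans hl (Nat.le_succ i)),
        fun l m hlm hm => hdist l m hlm (le_trans hm (Nat.le_succ i)),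
        fun l h1 h2 => hmem l h1 (le_trans h2 (Nat.le_succ i)), ?_, ?_⟩
      · intro l hl
        rw [hc', recolorFn_ne (hnotf (l+1) hl)]
        exact hcol l (Nat.lt_succ_of_lt hl)
      · intro l hl
        have hm := hmiss l (le_trans hl (Nat.le_succ i))
        refine ⟨hm.1, fun g hg hvg => ?_⟩
        by_cases hgf : g = f
        · exact absurd (hgf ▸ hvg) (hnotin l hl)
        · rw [hc', recolorFn_ne hgf]
          exact hm.2 g hg hvg
    have hmu : MissingAt S c' n u (aa i) := by
      refine ⟨(hmiss i (Nat.le_succ i)).1, fun g hg hug => ?_⟩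
      by_cases hgf : g = f
      · rw [hc', hgf, recolorFn_same]
        intro hγ
        exact hu.2 f hfS (by rw [hf]; exact Sym2.mem_mk_left u _) (hγ ▸ haai)
      · rw [hc', recolorFn_ne hgf]
        intro hcg
        exact hc.2 g hg f hfS hgf ⟨u, hug, by rw [hf]; exact Sym2.mem_mk_left u _⟩
          (hcg.trans haai.symm)
    have hmv : MissingAt S c' n (vv i) (aa i) := by
      have hm := hmiss i (Nat.le_succ i)
      refine ⟨hm.1, fun g hg hvg => ?_⟩
      by_cases hgf : g = f
      · exact absurd (hgf ▸ hvg) (hnotin i le_rfl)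
      · rw [hc', recolorFn_ne hgf]
        exact hm.2 g hg hvg
    exact ih c' vv aa (aa i) hc'p hfan' hmu hmv

lemma walk_first_edge {G : SimpleGraph V} {a b : V} (p : G.Walk a b) (hab : a ≠ b) :
    ∃ e ∈ p.edges, a ∈ e := by
  cases p with
  | nil => exact absurd rfl hab
  | @cons _ v _ h q =>
    exact ⟨s(a, v), by rw [SimpleGraph.Walk.edges_cons]; exact List.mem_cons_self,
      Sym2.mem_mk_left a v⟩

lemma path_internal_two_edges {G : SimpleGraph V} {a b : V} (p : G.Walk a b) (hp : p.IsPath) :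
    ∀ x ∈ p.support, x ≠ a → x ≠ b →
      ∃ e ∈ p.edges, ∃ f ∈ p.edges, e ≠ f ∧ x ∈ e ∧ x ∈ f := by
  induction p with
  | nil =>
    intro x hx hxa _
    simp only [SimpleGraph.Walk.support_nil, List.mem_singleton] at hx
    exact absurd hx hxa
  | @cons a a' b h q ih =>
    intro x hx hxa hxb
    rw [SimpleGraph.Walk.support_cons, List.mem_cons] at hx
    rcases hx with rfl | hx
    · exact absurd rfl hxa
    have hq : q.IsPath := hp.of_cons
    have hanq : a ∉ q.support := (SimpleGraph.Walk.cons_isPath_iff h q).mp hp |>.2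
    by_cases hxa' : x = a'
    · subst hxa'
      obtain ⟨f, hfq, hxf⟩ := walk_first_edge q hxb
      refine ⟨s(a, x), by simp, f, by simp [hfq], ?_, Sym2.mem_mk_right a x, hxf⟩
      intro hef
      rw [← hef] at hfq
      exact hanq (q.fst_mem_support_of_mem_edges hfq)
    · obtain ⟨e, heq, f, hfq, hef, hxe, hxf⟩ := ih hq x hx hxa' hxb
      exact ⟨e, by simp [heq], f, by simp [hfq], hef, hxe, hxf⟩

lemma walk_cross {G : SimpleGraph V} {T : Set V} {x y : V} (w : G.Walk x y)
    (hx : x ∉ T) (hy : y ∈ T) : ∃ s t, G.Adj s t ∧ s ∉ T ∧ t ∈ T := by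
  induction w with
  | nil => exact absurd hy hx
  | @cons a a' b h q ih =>
    by_cases ha' : a' ∈ T
    · exact ⟨a, a', h, hx, ha'⟩
    · exact ih ha' hy

lemma kempeG_edge {S : Set (Sym2 V)} {c : Sym2 V → ℕ} {α β : ℕ} {e : Sym2 V}
    (he : e ∈ (kempeG S c α β).edgeSet) : e ∈ S ∧ (c e = α ∨ c e = β) := by
  induction e with
  | _ x y =>
    have h := kempeG_adj.mp ((SimpleGraph.mem_edgeSet (kempeG S c α β)).mp he)
    exact ⟨h.2.1, h.2.2⟩

/-- At a vertex missing color `δ` (where `δ ∈ {α, β}`), there cannot be two distinct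
Kempe edges. -/
lemma two_kempe_edges_contra {S : Set (Sym2 V)} {c : Sym2 V → ℕ} {n α β : ℕ}
    (hc : EdgeProperOn S c n) {x : V} {e f : Sym2 V} {δ : ℕ} (hδ : δ = α ∨ δ = β)
    (he : e ∈ S ∧ (c e = α ∨ c e = β)) (hf : f ∈ S ∧ (c f = α ∨ c f = β))
    (hef : e ≠ f) (hxe : x ∈ e) (hxf : x ∈ f)
    (hmiss : ∀ g ∈ S, x ∈ g → c g ≠ δ) : False := by
  have h1 := hc.2 e he.1 f hf.1 hef ⟨x, hxe, hxf⟩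
  have h2 := hmiss e he.1 hxe
  have h3 := hmiss f hf.1 hxf
  rcases he.2 with h | h <;> rcases hf.2 with h' | h' <;> rcases hδ with rfl | rfl <;> omega

lemma kempe_no_three {S : Set (Sym2 V)} {c : Sym2 V → ℕ} {n α β : ℕ}
    (hc : EdgeProperOn S c n) {u a b : V}
    (hu : ∀ g ∈ S, u ∈ g → c g ≠ β) (ha : ∀ g ∈ S, a ∈ g → c g ≠ α)
    (hb : ∀ g ∈ S, b ∈ g → c g ≠ α)
    (hua : u ≠ a) (hub : u ≠ b) (hab : a ≠ b)
    (h1 : (kempeG S c α β).Reachable u a) (h2 : (kempeG S c α β).Reachable u b) : False := by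
  classical
  set D := kempeG S c α β with hD
  obtain ⟨q⟩ := (h1.symm.trans h2 : D.Reachable a b)
  set P : D.Walk a b := q.toPath.1 with hP
  have hPp : P.IsPath := q.toPath.2
  have hedge : ∀ e ∈ P.edges, e ∈ S ∧ (c e = α ∨ c e = β) :=
    fun e he => kempeG_edge (P.edges_subset_edgeSet he)
  -- u is not on P
  have huP : u ∉ P.support := by
    intro huP
    obtain ⟨e, heP, f, hfP, hef, hue, huf⟩ :=
      path_internal_two_edges P hPp u huP hua hub
    exact two_kempe_edges_contra hc (Or.inr rfl) (hedge e heP) (hedge f hfP) hef hue huf hu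
  -- cross from u into the support of P
  obtain ⟨w⟩ := h1
  obtain ⟨s, t, hst, hsT, htT⟩ :=
    walk_cross (T := {x | x ∈ P.support}) w huP (by exact P.start_mem_support)
  have hgS : s(s, t) ∈ S ∧ (c s(s,t) = α ∨ c s(s,t) = β) := ⟨(kempeG_adj.mp hst).2.1, (kempeG_adj.mp hst).2.2⟩
  have hgP : s(s, t) ∉ P.edges := fun h => hsT (P.fst_mem_support_of_mem_edges h)
  have htg : t ∈ s(s, t) := Sym2.mem_mk_right s t
  by_cases hta : t = a
  · subst hta
    obtain ⟨e, heP, hte⟩ := walk_first_edge P hab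
    exact two_kempe_edges_contra hc (Or.inl rfl) (hedge e heP) hgS
      (fun h => hgP (h ▸ heP)) hte htg ha
  by_cases htb : t = b
  · subst htb
    obtain ⟨e, heP', hte⟩ := walk_first_edge P.reverse hab.symm
    have heP : e ∈ P.edges := by
      rw [SimpleGraph.Walk.edges_reverse, List.mem_reverse] at heP'
      exact heP'
    exact two_kempe_edges_contra hc (Or.inl rfl) (hedge e heP) hgS
      (fun h => hgP (h ▸ heP)) hte htg hb
  · obtain ⟨e, heP, f, hfP, hef, hte, htf⟩ := path_internal_two_edges P hPp t htT hta htb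
    have h1' := hc.2 e (hedge e heP).1 f (hedge f hfP).1 hef ⟨t, hte, htf⟩
    have h2' := hc.2 e (hedge e heP).1 s(s,t) hgS.1 (fun h => hgP (h ▸ heP)) ⟨t, hte, htg⟩
    have h3' := hc.2 f (hedge f hfP).1 s(s,t) hgS.1 (fun h => hgP (h ▸ hfP)) ⟨t, htf, htg⟩
    rcases (hedge e heP).2 with h | h <;> rcases (hedge f hfP).2 with h' | h' <;>
      rcases hgS.2 with h'' | h'' <;> omega

lemma fan_stuck {S : Set (Sym2 V)} {c : Sym2 V → ℕ} {n : ℕ} {u v : V}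
    (hc : EdgeProperOn S c n) (he : s(u,v) ∉ S)
    {m j : ℕ} {vv : ℕ → V} {aa : ℕ → ℕ} (hfan : FanProp S n u v c m vv aa)
    (hj1 : 1 ≤ j) (hjm : j ≤ m) (hstuck : aa m = aa (j-1))
    {β : ℕ} (hβ : MissingAt S c n u β) :
    EdgeColorableOn (insert s(u,v) S) n := by
  classical
  obtain ⟨h0, hne, hdist, hmem, hcol, hmiss⟩ := hfan
  set α : ℕ := aa m with hα
  have hjm' : j - 1 < m := by omega
  have hfj : s(u, vv j) ∈ S := hmem j hj1 hjm
  have hcfj : c s(u, vv j) = α := by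
    have := hcol (j-1) hjm'
    rw [show j - 1 + 1 = j by omega] at this
    rw [this, hstuck]
  have hαlt : α < n := (hmiss m le_rfl).1
  have hβlt : β < n := hβ.1
  have hαβ : α ≠ β := by
    intro h
    exact hβ.2 s(u, vv j) hfj (Sym2.mem_mk_left u _) (by rw [hcfj, h])
  -- names
  set a : V := vv (j-1) with ha
  set b : V := vv m with hb
  have hma : MissingAt S c n a α := by rw [hstuck]; exact hmiss (j-1) (le_of_lt hjm')
  have hmb : MissingAt S c n b α := hmiss m le_rfl
  have hau : a ≠ u := hne (j-1) (le_of_lt hjm')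
  have hbu : b ≠ u := hne m le_rfl
  have hab : a ≠ b := hdist (j-1) m hjm' le_rfl
  have hvv_ne : ∀ l l' : ℕ, l ≠ l' → l ≤ m → l' ≤ m → vv l ≠ vv l' := by
    intro l l' hne' hl hl'
    rcases Nat.lt_or_ge l l' with h | h
    · exact hdist l l' h hl'
    · exact fun hh => (hdist l' l (by omega) hl) hh.symm
  have haaβ : ∀ l, l < m → aa l ≠ β := by
    intro l hl
    have hg := hmem (l+1) (by omega) (by omega)
    have := hβ.2 s(u, vv (l+1)) hg (Sym2.mem_mk_left u _)
    rw [hcol l hl] at this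
    exact this
  have haaα : ∀ l, l < m → l ≠ j - 1 → aa l ≠ α := by
    intro l hl hlj haeq
    have hg := hmem (l+1) (by omega) (by omega)
    have hce : c s(u, vv (l+1)) = α := by rw [hcol l hl]; exact haeq
    have hneq : s(u, vv (l+1)) ≠ s(u, vv j) := by
      intro hh
      exact hvv_ne (l+1) j (by omega) (by omega) hjm (Sym2.congr_right.mp hh)
    exact hc.2 _ hg _ hfj hneq ⟨u, Sym2.mem_mk_left u _, Sym2.mem_mk_left u _⟩
      (by rw [hce, hcfj])
  set D := kempeG S c α β with hD
  by_cases hra : D.Reachable u a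
  · by_cases hrb : D.Reachable u b
    · -- case 3 : impossible
      exact absurd (kempe_no_three hc hβ.2 hma.2 hmb.2
        (Ne.symm hau) (Ne.symm hbu) hab hra hrb) not_false
    · -- case 2 : swap the component of b, rotate the full fan
      set K : Set V := {x | D.Reachable b x} with hK
      have hKcl : KClosed S c α β K := reach_closed S c α β b
      have hbK : b ∈ K := SimpleGraph.Reachable.refl b
      have huK : u ∉ K := fun h => hrb h.symm
      have haK : a ∉ K := by
        intro h
        exact hrb (hra.trans (SimpleGraph.Reachable.symm h))
      set c₁ := kempeSwap S c α β K with hc₁def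
      have hc₁ : EdgeProperOn S c₁ n := swap_proper hc hαlt hβlt hKcl
      set aa' : ℕ → ℕ := fun l => if l = m then β else aa l with haa'
      have hfan₁ : FanProp S n u v c₁ m vv aa' := by
        refine ⟨h0, hne, hdist, hmem, ?_, ?_⟩
        · intro l hl
          have hg := hmem (l+1) (by omega) (by omega)
          show c₁ s(u, vv (l + 1)) = if l = m then β else aa l
          rw [hc₁def, swap_out hKcl huK hg (Sym2.mem_mk_left u _),
            if_neg (by omega : ¬ l = m)]
          exact hcol l hl
        · intro l hl
          show MissingAt S c₁ n (vv l) (if l = m then β else aa l)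
          by_cases hlm : l = m
          · rw [if_pos hlm, hlm]
            exact missing_swap_in hαβ hβlt hbK hmb
          · rw [if_neg hlm]
            by_cases hlj : l = j - 1
            · rw [hlj, ← hstuck]
              exact missing_swap_out hKcl haK (by rw [hstuck, ← hlj]; exact hmiss _ hl)
            · exact missing_swap_other (haaα l (by omega) hlj) (haaβ l (by omega))
                (hmiss l hl)
      have hmu₁ : MissingAt S c₁ n u β := missing_swap_out hKcl huK hβ
      have hmb₁ : MissingAt S c₁ n (vv m) β := missing_swap_in hαβ hβlt hbK hmb
      exact fan_rotate he m c₁ vv aa' β hc₁ hfan₁ hmu₁ hmb₁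
  · -- case 1 : swap the component of a, rotate the fan up to j - 1
    set K : Set V := {x | D.Reachable a x} with hK
    have hKcl : KClosed S c α β K := reach_closed S c α β a
    have haK : a ∈ K := SimpleGraph.Reachable.refl a
    have huK : u ∉ K := fun h => hra h.symm
    set c₁ := kempeSwap S c α β K with hc₁def
    have hc₁ : EdgeProperOn S c₁ n := swap_proper hc hαlt hβlt hKcl
    set aa' : ℕ → ℕ := fun l => if l = j - 1 then β else aa l with haa'
    have hfan₁ : FanProp S n u v c₁ (j-1) vv aa' := by
      refine ⟨h0, fun l hl => hne l (by omega), fun l l' hll' hl' => hdist l l' hll' (by omega),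
        fun l h1 h2 => hmem l h1 (by omega), ?_, ?_⟩
      · intro l hl
        have hg := hmem (l+1) (by omega) (by omega)
        show c₁ s(u, vv (l + 1)) = if l = j - 1 then β else aa l
        rw [hc₁def, swap_out hKcl huK hg (Sym2.mem_mk_left u _),
          if_neg (by omega : ¬ l = j - 1)]
        exact hcol l (by omega)
      · intro l hl
        show MissingAt S c₁ n (vv l) (if l = j - 1 then β else aa l)
        by_cases hlj : l = j - 1
        · rw [if_pos hlj, hlj]
          exact missing_swap_in hαβ hβlt haK hma
        · rw [if_neg hlj]
          exact missing_swap_other (haaα l (by omega) hlj) (haaβ l (by omega))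
            (hmiss l (by omega))
    have hmu₁ : MissingAt S c₁ n u β := missing_swap_out hKcl huK hβ
    have hma₁ : MissingAt S c₁ n (vv (j-1)) β := missing_swap_in hαβ hβlt haK hma
    exact fan_rotate he (j-1) c₁ vv aa' β hc₁ hfan₁ hmu₁ hma₁

lemma kempe_extend [Fintype V] {S : Set (Sym2 V)} {c : Sym2 V → ℕ} {n : ℕ}
    (hc : EdgeProperOn S c n) (hdiag : ∀ e ∈ S, ¬ e.IsDiag)
    (hdeg : ∀ x : V, {f | f ∈ S ∧ x ∈ f}.ncard < n)
    {u v : V} (huv : u ≠ v) (he : s(u,v) ∉ S) :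
    EdgeColorableOn (insert s(u,v) S) n := by
  classical
  by_contra hngood
  have claim : ∀ m : ℕ, ∃ vv aa, FanProp S n u v c m vv aa := by
    intro m
    induction m with
    | zero =>
      obtain ⟨γ, hγ⟩ := exists_missing c (hdeg v)
      refine ⟨fun _ => v, fun _ => γ, rfl, fun l _ => huv.symm, ?_, ?_, ?_, ?_⟩
      · intro l m hlm hm; omega
      · intro l h1 h2; omega
      · intro l hl; omega
      · intro l _; exact hγ
    | succ m ih =>
      obtain ⟨vv, aa, hfan⟩ := ih
      obtain ⟨h0, hne, hdist, hmem, hcol, hmiss⟩ := hfan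
      by_cases hmu : ∀ f ∈ S, u ∈ f → c f ≠ aa m
      · exact absurd (fan_rotate he m c vv aa (aa m) hc
          ⟨h0, hne, hdist, hmem, hcol, hmiss⟩
          ⟨(hmiss m le_rfl).1, hmu⟩ (hmiss m le_rfl)) hngood
      push_neg at hmu
      obtain ⟨g, hgS, hug, hcg⟩ := hmu
      obtain ⟨w, rfl⟩ := Sym2.mem_iff_exists.mp hug
      have hwu : w ≠ u := by
        intro h
        exact hdiag _ hgS (by rw [h]; exact Sym2.mk_isDiag_iff.mpr rfl)
      by_cases hwfan : ∃ l, l ≤ m ∧ w = vv l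
      · obtain ⟨l, hlm, rfl⟩ := hwfan
        have hl1 : 1 ≤ l := by
          rcases Nat.eq_zero_or_pos l with rfl | h
          · rw [h0] at hgS; exact absurd hgS he
          · exact h
        have hstuck : aa m = aa (l - 1) := by
          have h1 := hcol (l-1) (by omega)
          rw [show l - 1 + 1 = l by omega] at h1
          rw [← hcg, h1]
        obtain ⟨β, hβ⟩ := exists_missing c (hdeg u)
        exact absurd (fan_stuck hc he ⟨h0, hne, hdist, hmem, hcol, hmiss⟩ hl1 hlm hstuck
          hβ) hngood
      · push_neg at hwfan
        obtain ⟨γw, hγw⟩ := exists_missing c (hdeg w)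
        refine ⟨fun t => if t = m+1 then w else vv t, fun t => if t = m+1 then γw else aa t,
          ?_, ?_, ?_, ?_, ?_, ?_⟩
        · show (if 0 = m+1 then w else vv 0) = v
          rw [if_neg (by omega : ¬ (0 : ℕ) = m+1)]; exact h0
        · intro l hl
          show (if l = m+1 then w else vv l) ≠ u
          by_cases h : l = m+1
          · rw [if_pos h]; exact hwu
          · rw [if_neg h]; exact hne l (by omega)
        · intro l m' hlm' hm'
          show (if l = m+1 then w else vv l) ≠ (if m' = m+1 then w else vv m')
          rw [if_neg (by omega : ¬ l = m+1)]
          by_cases h : m' = m+1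
          · rw [if_pos h]
            exact fun hh => (hwfan l (by omega)) hh.symm
          · rw [if_neg h]
            exact hdist l m' hlm' (by omega)
        · intro l h1 h2
          show s(u, if l = m+1 then w else vv l) ∈ S
          by_cases h : l = m+1
          · rw [if_pos h]; exact hgS
          · rw [if_neg h]; exact hmem l h1 (by omega)
        · intro l hl
          show c s(u, if l + 1 = m+1 then w else vv (l+1)) = if l = m+1 then γw else aa l
          rw [if_neg (by omega : ¬ l = m+1)]
          by_cases h : l + 1 = m + 1
          · rw [if_pos h, hcg]
            have : l = m := by omega
            rw [this]
          · rw [if_neg h]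
            exact hcol l (by omega)
        · intro l hl
          show MissingAt S c n (if l = m+1 then w else vv l) (if l = m+1 then γw else aa l)
          by_cases h : l = m+1
          · rw [if_pos h, if_pos h]; exact hγw
          · rw [if_neg h, if_neg h]; exact hmiss l (by omega)
  obtain ⟨vv, aa, hfan⟩ := claim (Fintype.card V)
  have hinj : Function.Injective (fun i : Fin (Fintype.card V + 1) => vv i) := by
    intro i j hij
    by_contra hne'
    have hd := hfan.2.2.1
    have hv : (i : ℕ) ≠ (j : ℕ) := fun hh => hne' (Fin.ext hh)
    rcases Nat.lt_or_ge (i : ℕ) (j : ℕ) with h | h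
    · exact hd i j h (Nat.lt_succ_iff.mp j.isLt) hij
    · exact hd j i (by omega) (Nat.lt_succ_iff.mp i.isLt) hij.symm
  have := Fintype.card_le_of_injective _ hinj
  simp only [Fintype.card_fin] at this
  omega

lemma deg_le_of_colorable {S : Set (Sym2 V)} {b : ℕ} (hb : EdgeColorableOn S b) (x : V) :
    edgeDegOn S x ≤ b := by
  obtain ⟨c, hc⟩ := hb
  have hinj : Set.InjOn c {e | e ∈ S ∧ x ∈ e} := by
    intro e he f hf hef
    by_contra hne
    exact hc.2 e he.1 f hf.1 hne ⟨x, he.2, hf.2⟩ hef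
  have himg : c '' {e | e ∈ S ∧ x ∈ e} ⊆ (Finset.range b : Set ℕ) := by
    rintro γ ⟨e, he, rfl⟩
    simp only [Finset.coe_range, Set.mem_Iio]
    exact hc.1 e he.1
  calc edgeDegOn S x = (c '' {e | e ∈ S ∧ x ∈ e}).ncard :=
        (Set.ncard_image_of_injOn hinj).symm
    _ ≤ ((Finset.range b : Set ℕ)).ncard := Set.ncard_le_ncard himg (Set.toFinite _)
    _ = b := by rw [Set.ncard_coe_finset, Finset.card_range]

/-- Theorem 12 of the paper. If `H` (edge set `S`) is a
maximum `Δ(G)`-edge-colorable subgraph of a finite simple graph `G`, then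
`Δ(H) = Δ(G)`, and moreover `χ'(H) = Δ(H)`, i.e. `H` is class I. -/
theorem maxColorableSub_maxDeg_eq_and_classI
    [Fintype V] (G : SimpleGraph V) [DecidableRel G.Adj]
    (S : Set (Sym2 V)) (hS : G.IsMaxColorableSub S) :
    edgeMaxDegOn S = G.maxDegree ∧ edgeChromIndex S = edgeMaxDegOn S := by
  classical
  obtain ⟨hsub, hcol, hmax⟩ := hS
  have hfin : S.Finite := Set.toFinite S
  have hinc : ∀ x : V, (G.incidenceSet x).ncard = G.degree x := by
    intro x
    rw [Set.ncard_eq_toFinset_card', Set.toFinset_card]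
    have h1 : Fintype.card (G.incidenceSet x) = G.degree x := G.card_incidenceSet_eq_degree x
    convert h1 using 2
  have hdegle : ∀ x, edgeDegOn S x ≤ G.degree x := by
    intro x
    have hsub2 : {e | e ∈ S ∧ x ∈ e} ⊆ G.incidenceSet x :=
      fun e he => ⟨hsub he.1, he.2⟩
    have h1 : edgeDegOn S x ≤ (G.incidenceSet x).ncard :=
      Set.ncard_le_ncard hsub2 (Set.toFinite _)
    rw [hinc x] at h1
    exact h1
  have hle : edgeMaxDegOn S ≤ G.maxDegree :=
    Finset.sup_le fun x _ => le_trans (hdegle x) (G.degree_le_maxDegree x)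
  have hge : G.maxDegree ≤ edgeMaxDegOn S := by
    by_contra h
    push_neg at h
    have hall : ∀ x : V, {f | f ∈ S ∧ x ∈ f}.ncard < G.maxDegree := by
      intro x
      have hx : edgeDegOn S x ≤ edgeMaxDegOn S :=
        Finset.le_sup (Finset.mem_univ x)
      have : edgeDegOn S x = {f | f ∈ S ∧ x ∈ f}.ncard := rfl
      omega
    have hne : Nonempty V := by
      by_contra hne
      rw [not_nonempty_iff] at hne
      have h0 : G.maxDegree = 0 := by
        rw [SimpleGraph.maxDegree, Finset.univ_eq_empty]
        rfl
      omega
    obtain ⟨u, hu⟩ := G.exists_maximal_degree_vertex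
    have hIu : {f | f ∈ S ∧ u ∈ f}.ncard < (G.incidenceSet u).ncard := by
      rw [hinc u, ← hu]
      exact hall u
    have hnotsub : ¬ (G.incidenceSet u ⊆ {f | f ∈ S ∧ u ∈ f}) := by
      intro hss
      exact absurd (Set.ncard_le_ncard hss (Set.toFinite _)) (by omega)
    obtain ⟨e₀, he₀, he₀'⟩ := Set.not_subset.mp hnotsub
    obtain ⟨hE, huE⟩ := he₀
    obtain ⟨w, rfl⟩ := Sym2.mem_iff_exists.mp huE
    have hadj : G.Adj u w := (SimpleGraph.mem_edgeSet G).mp hE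
    have hS' : s(u,w) ∉ S := fun hh => he₀' ⟨hh, huE⟩
    obtain ⟨c, hc⟩ := hcol
    have hdiag : ∀ e ∈ S, ¬ e.IsDiag := fun e heS => G.not_isDiag_of_mem_edgeSet (hsub heS)
    have hcol' := kempe_extend hc hdiag hall hadj.ne hS'
    have hle2 := hmax (insert s(u,w) S) (Set.insert_subset hE hsub) hcol'
    rw [Set.ncard_insert_of_notMem hS' hfin] at hle2
    omega
  have h1 : edgeMaxDegOn S = G.maxDegree := le_antisymm hle hge
  refine ⟨h1, ?_⟩
  have hupper : edgeChromIndex S ≤ edgeMaxDegOn S := by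
    rw [h1]
    exact Nat.sInf_le hcol
  have hlower : edgeMaxDegOn S ≤ edgeChromIndex S := by
    apply le_csInf (⟨G.maxDegree, hcol⟩ : {n | EdgeColorableOn S n}.Nonempty)
    intro b hb
    exact Finset.sup_le fun x _ => deg_le_of_colorable hb x
  omega
end
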